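/- arXiv:2405.04910 — 4 statements merged into one kernel-verified Lean document; each statement's English description precedes it below -/
import Mathlib

section
/- Let m be a positive integer and let X_1, …, X_m be independent random variables on a probability space with values in [0,1] almost surely and common mean μ = E[X_i]. Then for every x > 0, P(∃ n ∈ {1,…,m} such that Σ_{i=1}^n (μ − X_i) ≥ x) ≤ exp(−2x²/m), and likewise P(∃ n ∈ {1,…,m} such that Σ_{i=1}^n (X_i − μ) ≥ x) ≤ exp(−2x²/m). -/
/-!
Write `S k = ∑ i < min k n, Y i`. For `t ≥ 0` the process `k ↦ exp (t * S k)` is a nonnegative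
submartingale for the filtration of the strict past: each step multiplies it by a factor independent
of the past whose mean `mgf (Y k) t` is at least `1`. Doob's maximal inequality bounds
`P (max_{k ≤ n} S k ≥ ε)` by `exp (-t ε) * mgf (S n) t`, Hoeffding's lemma bounds the mgf by
`exp (n (b - a)² t² / 8)`, and `t = 4 ε / (n (b - a)²)` gives `exp (-2 ε² / (n (b - a)²))`.
-/

open MeasureTheory ProbabilityTheory Finset
open scoped NNReal ENNReal

namespace ProbabilityTheory

variable {Ω : Type*} [MeasurableSpace Ω] {P : Measure Ω} {Y : ℕ → Ω → ℝ}

def strictNaturalFiltration (hY : ∀ i, Measurable (Y i)) : Filtration ℕ ‹MeasurableSpace Ω› where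
  seq k := ⨆ j < k, MeasurableSpace.comap (Y j) inferInstance
  mono' _ _ hkl := biSup_mono fun _ hj => hj.trans_le hkl
  le' _ := iSup₂_le fun j _ => (hY j).comap_le

lemma measurable_strictNaturalFiltration (hY : ∀ i, Measurable (Y i)) {j k : ℕ} (hjk : j < k) :
    Measurable[strictNaturalFiltration hY k] (Y j) :=
  Measurable.of_comap_le (le_iSup₂ (f := fun j (_ : j < k) =>
    MeasurableSpace.comap (Y j) inferInstance) j hjk)

lemma indep_comap_strictNaturalFiltration {n : ℕ} (hY : ∀ i, Measurable (Y i))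
    (hindep : iIndepFun (fun i : Fin n => Y i) P) {k : ℕ} (hk : k < n) :
    Indep (MeasurableSpace.comap (Y k) inferInstance) (strictNaturalFiltration hY k) P := by
  have h := indep_iSup_of_disjoint (fun i : Fin n => (hY i).comap_le) hindep.iIndep
    (S := {⟨k, hk⟩}) (T := {i | (i : ℕ) < k}) (by simp)
  convert h using 1
  · simp
  · refine le_antisymm (iSup₂_le fun j hj => ?_) (iSup₂_le fun i hi => ?_)
    · exact le_iSup₂ (f := fun (i : Fin n) (_ : i ∈ {i : Fin n | (i : ℕ) < k}) =>
      MeasurableSpace.comap (Y i) inferInstance) ⟨j, hj.trans hk⟩ hj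
    · exact (measurable_strictNaturalFiltration hY hi).comap_le

lemma one_le_mgf_of_integral_eq_zero [IsProbabilityMeasure P] {X : Ω → ℝ} (hX : Integrable X P)
    (h0 : P[X] = 0) {t : ℝ} (hexp : Integrable (fun ω => Real.exp (t * X ω)) P) :
    1 ≤ mgf X P t := by
  calc 1 = ∫ ω, (1 + t * X ω) ∂P := by
        rw [integral_add (integrable_const 1) (hX.const_mul t), integral_const_mul, h0]; simp
    _ ≤ mgf X P t := integral_mono ((integrable_const 1).add (hX.const_mul t)) hexp
        fun ω => by linarith [Real.add_one_le_exp (t * X ω)]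

lemma hasSubgaussianMGF_sum_range {n k : ℕ} {c : ℝ≥0}
    (hindep : iIndepFun (fun i : Fin n => Y i) P) (hsub : ∀ i < n, HasSubgaussianMGF (Y i) c P)
    (hk : k ≤ n) : HasSubgaussianMGF (fun ω => ∑ i ∈ range k, Y i ω) (k * c) P := by
  have h := HasSubgaussianMGF.sum_of_iIndepFun (hindep.precomp (Fin.castLE_injective hk))
    (s := univ) (c := fun _ => c) fun i _ => hsub i (by lia)
  simp only [sum_const, card_univ, Fintype.card_fin, nsmul_eq_mul] at h
  convert h using 2 with ω
  exact (Fin.sum_univ_eq_sum_range (fun i => Y i ω) k).symm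

lemma submartingale_exp_mul_sum_range [IsProbabilityMeasure P] {n : ℕ} {c : ℝ≥0}
    (hY : ∀ i, Measurable (Y i)) (hindep : iIndepFun (fun i : Fin n => Y i) P)
    (hmean : ∀ i < n, P[Y i] = 0) (hsub : ∀ i < n, HasSubgaussianMGF (Y i) c P) (t : ℝ) :
    Submartingale (fun k ω => Real.exp (t * ∑ i ∈ range (min k n), Y i ω))
      (strictNaturalFiltration hY) P := by
  set f : ℕ → Ω → ℝ := fun k ω => Real.exp (t * ∑ i ∈ range (min k n), Y i ω)
  have hadp : StronglyAdapted (strictNaturalFiltration hY) f := fun k =>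
    ((Finset.measurable_sum _ fun i hi => measurable_strictNaturalFiltration hY
      ((mem_range.1 hi).trans_le (min_le_left k n))).const_mul t).exp.stronglyMeasurable
  have hint : ∀ k, Integrable (f k) P := fun k =>
    (hasSubgaussianMGF_sum_range hindep hsub (min_le_right k n)).integrable_exp_mul t
  refine submartingale_nat hadp hint fun k => ?_
  by_cases hk : k < n
  · set g : Ω → ℝ := fun ω => Real.exp (t * Y k ω)
    have hfg : f (k + 1) = f k * g := by
      ext ω
      simp only [f, g, Pi.mul_apply, ← Real.exp_add, min_eq_left hk.le,
        min_eq_left (Nat.succ_le_of_lt hk), sum_range_succ, mul_add]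
    have hg : Integrable g P := (hsub k hk).integrable_exp_mul t
    have hg_cond : P[g | strictNaturalFiltration hY k] =ᵐ[P] fun _ => mgf (Y k) P t :=
      condExp_indep_eq (hY k).comap_le ((strictNaturalFiltration hY).le k)
        (((measurable_id.const_mul t).exp.comp (comap_measurable (Y k))).stronglyMeasurable)
        (indep_comap_strictNaturalFiltration hY hindep hk)
    have hmgf : 1 ≤ mgf (Y k) P t :=
      one_le_mgf_of_integral_eq_zero (hsub k hk).integrable (hmean k hk) hg
    rw [hfg]
    filter_upwards [condExp_mul_of_stronglyMeasurable_left (hadp k) (hfg ▸ hint (k + 1)) hg,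
      hg_cond] with ω h1 h2
    rw [h1, Pi.mul_apply, h2]
    exact le_mul_of_one_le_right (Real.exp_pos _).le hmgf
  · have hfk : f (k + 1) = f k := by
      simp only [f, min_eq_right (not_lt.1 hk), min_eq_right (Nat.le_succ_of_le (not_lt.1 hk))]
    rw [hfk, condExp_of_stronglyMeasurable ((strictNaturalFiltration hY).le k) (hadp k) (hint k)]

theorem measure_exists_sum_range_ge_le_of_iIndepFun [IsProbabilityMeasure P] {n : ℕ} {c : ℝ≥0}
    (hY : ∀ i, Measurable (Y i)) (hindep : iIndepFun (fun i : Fin n => Y i) P)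
    (hmean : ∀ i < n, P[Y i] = 0) (hsub : ∀ i < n, HasSubgaussianMGF (Y i) c P)
    {ε : ℝ} (hε : 0 ≤ ε) :
    P {ω | ∃ k ≤ n, ε ≤ ∑ i ∈ range k, Y i ω}
      ≤ ENNReal.ofReal (Real.exp (-ε ^ 2 / (2 * n * c))) := by
  rcases (show (0 : ℝ) ≤ n * c by positivity).eq_or_lt with hnc | hnc
  · simp [mul_assoc, ← hnc, prob_le_one]
  set t := ε / (n * c)
  set f : ℕ → Ω → ℝ := fun k ω => Real.exp (t * ∑ i ∈ range (min k n), Y i ω)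
  set E : Set Ω :=
    {ω | Real.exp (t * ε) ≤ (range (n + 1)).sup' nonempty_range_add_one fun k => f k ω}
  have hsubset : {ω | ∃ k ≤ n, ε ≤ ∑ i ∈ range k, Y i ω} ⊆ E := by
    rintro ω ⟨k, hk, hεk⟩
    refine le_sup'_of_le (fun k => f k ω) (mem_range.2 (Nat.lt_succ_of_le hk)) ?_
    simp only [f, min_eq_left hk]
    gcongr
  have hdoob := maximal_ineq (submartingale_exp_mul_sum_range hY hindep hmean hsub t)
    (fun _ _ => (Real.exp_pos _).le) (ε := (Real.exp (t * ε)).toNNReal) n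
  have hSn := hasSubgaussianMGF_sum_range hindep hsub (le_refl n)
  have hmgf : ∫ ω in E, f n ω ∂P ≤ Real.exp (n * c * t ^ 2 / 2) := calc
    _ ≤ ∫ ω, f n ω ∂P := setIntegral_le_integral (by simpa [f] using hSn.integrable_exp_mul t)
          (ae_of_all _ fun _ => (Real.exp_pos _).le)
    _ = mgf (fun ω => ∑ i ∈ range n, Y i ω) P t := by simp [f, mgf]
    _ ≤ _ := hSn.mgf_le t
  have hexp : 0 < Real.exp (t * ε) := Real.exp_pos _
  calc _ ≤ P E := measure_mono hsubset
    _ ≤ _ := by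
      rw [Real.coe_toNNReal _ hexp.le] at hdoob
      rw [← ENNReal.mul_le_mul_iff_right (ENNReal.ofReal_pos.2 hexp).ne' ENNReal.ofReal_ne_top,
        ← ENNReal.ofReal_mul hexp.le, ← Real.exp_add,
        show t * ε + -ε ^ 2 / (2 * n * c) = n * c * t ^ 2 / 2 by simp only [t]; field_simp; ring]
      exact hdoob.trans (ENNReal.ofReal_le_ofReal hmgf)

theorem measure_exists_sum_range_ge_le_of_mem_Icc [IsProbabilityMeasure P] {n : ℕ}
    (hY : ∀ i, Measurable (Y i)) (hindep : iIndepFun (fun i : Fin n => Y i) P)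
    (hmean : ∀ i < n, P[Y i] = 0) {a b : ℝ} (hbdd : ∀ i < n, ∀ᵐ ω ∂P, Y i ω ∈ Set.Icc a b)
    {ε : ℝ} (hε : 0 ≤ ε) :
    P {ω | ∃ k ≤ n, ε ≤ ∑ i ∈ range k, Y i ω}
      ≤ ENNReal.ofReal (Real.exp (-2 * ε ^ 2 / (n * (b - a) ^ 2))) := by
  convert measure_exists_sum_range_ge_le_of_iIndepFun hY hindep hmean (fun i hi =>
    hasSubgaussianMGF_of_mem_Icc_of_integral_eq_zero (hY i).aemeasurable (hbdd i hi) (hmean i hi))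
    hε using 3
  rw [NNReal.coe_pow, NNReal.coe_div, coe_nnnorm, Real.norm_eq_abs, div_pow, sq_abs,
    show 2 * (n : ℝ) * ((b - a) ^ 2 / (2 : ℝ≥0) ^ 2) = n * (b - a) ^ 2 / 2 by push_cast; ring,
    div_div_eq_mul_div]
  ring

lemma measure_exists_sum_Icc_ge_le_of_mem_Icc [IsProbabilityMeasure P] {m : ℕ} {Z : ℕ → Ω → ℝ}
    (hZ : ∀ i, Measurable (Z i)) (hindep : iIndepFun (fun i : Fin m => Z (i + 1)) P)
    (hmean : ∀ i ∈ Icc 1 m, P[Z i] = 0) {a : ℝ}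
    (hbdd : ∀ i ∈ Icc 1 m, ∀ᵐ ω ∂P, Z i ω ∈ Set.Icc a (a + 1)) {x : ℝ} (hx : 0 ≤ x) :
    P {ω | ∃ n ∈ Icc 1 m, x ≤ ∑ i ∈ Icc 1 n, Z i ω}
      ≤ ENNReal.ofReal (Real.exp (-2 * x ^ 2 / m)) := by
  have hmem {i : ℕ} (hi : i < m) : i + 1 ∈ Icc 1 m := mem_Icc.2 ⟨by lia, by lia⟩
  have h := measure_exists_sum_range_ge_le_of_mem_Icc (Y := fun i => Z (i + 1)) (fun i => hZ _)
    hindep (fun i hi => hmean _ (hmem hi)) (fun i hi => hbdd _ (hmem hi)) hx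
  rw [add_sub_cancel_left, one_pow, mul_one] at h
  refine (measure_mono ?_).trans h
  rintro ω ⟨n, hn, hxn⟩
  refine ⟨n, (mem_Icc.1 hn).2, ?_⟩
  rw [← Ico_add_one_right_eq_Icc, sum_Ico_eq_sum_range, add_tsub_cancel_right] at hxn
  simpa only [add_comm 1] using hxn

end ProbabilityTheory

theorem maximal_hoeffding_bound_general
    {Ω : Type*} [MeasurableSpace Ω] (P : Measure Ω) [IsProbabilityMeasure P]
    (m : ℕ)
    (X : ℕ → Ω → ℝ) (hXmeas : ∀ i, Measurable (X i))
    (hindep : iIndepFun (fun i : Fin m => X ((i : ℕ) + 1)) P)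
    (hbdd : ∀ i ∈ Finset.Icc 1 m, ∀ᵐ ω ∂P, X i ω ∈ Set.Icc (0 : ℝ) 1)
    (μ : ℝ) (hmean : ∀ i ∈ Finset.Icc 1 m, ∫ ω, X i ω ∂P = μ)
    (x : ℝ) (hx : 0 < x) :
    P {ω | ∃ n ∈ Finset.Icc 1 m, x ≤ ∑ i ∈ Finset.Icc 1 n, (μ - X i ω)}
        ≤ ENNReal.ofReal (Real.exp (-2 * x ^ 2 / m)) ∧
    P {ω | ∃ n ∈ Finset.Icc 1 m, x ≤ ∑ i ∈ Finset.Icc 1 n, (X i ω - μ)}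
        ≤ ENNReal.ofReal (Real.exp (-2 * x ^ 2 / m)) := by
  have hXint (i : ℕ) (hi : i ∈ Icc 1 m) : Integrable (X i) P :=
    Integrable.of_mem_Icc 0 1 (hXmeas i).aemeasurable (hbdd i hi)
  constructor
  · refine measure_exists_sum_Icc_ge_le_of_mem_Icc (a := μ - 1) (fun i => (hXmeas i).const_sub μ)
      (hindep.comp (fun _ y => μ - y) fun _ => measurable_id.const_sub μ) (fun i hi => ?_)
      (fun i hi => ?_) hx.le
    · rw [integral_sub (integrable_const μ) (hXint i hi), hmean i hi]
      simp
    · filter_upwards [hbdd i hi] with ω ⟨h0, h1⟩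
      constructor <;> linarith
  · refine measure_exists_sum_Icc_ge_le_of_mem_Icc (a := -μ) (fun i => (hXmeas i).sub_const μ)
      (hindep.comp (fun _ y => y - μ) fun _ => measurable_id.sub_const μ) (fun i hi => ?_)
      (fun i hi => ?_) hx.le
    · rw [integral_sub (hXint i hi) (integrable_const μ), hmean i hi]
      simp
    · filter_upwards [hbdd i hi] with ω ⟨h0, h1⟩
      constructor <;> linarith

/-- Maximal Hoeffding-type inequality for partial sums of independent `[0,1]`-valued
random variables with common mean `μ`. -/
theorem maximal_hoeffding_bound
    {Ω : Type*} [MeasurableSpace Ω] (P : Measure Ω) [IsProbabilityMeasure P]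
    (m : ℕ) (hm : 0 < m)
    (X : ℕ → Ω → ℝ) (hXmeas : ∀ i, Measurable (X i))
    (hindep : iIndepFun (fun i : Fin m => X ((i : ℕ) + 1)) P)
    (hbdd : ∀ i ∈ Finset.Icc 1 m, ∀ᵐ ω ∂P, X i ω ∈ Set.Icc (0 : ℝ) 1)
    (μ : ℝ) (hmean : ∀ i ∈ Finset.Icc 1 m, ∫ ω, X i ω ∂P = μ)
    (x : ℝ) (hx : 0 < x) :
    P {ω | ∃ n ∈ Finset.Icc 1 m, x ≤ ∑ i ∈ Finset.Icc 1 n, (μ - X i ω)}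
        ≤ ENNReal.ofReal (Real.exp (-2 * x ^ 2 / m)) ∧
    P {ω | ∃ n ∈ Finset.Icc 1 m, x ≤ ∑ i ∈ Finset.Icc 1 n, (X i ω - μ)}
        ≤ ENNReal.ofReal (Real.exp (-2 * x ^ 2 / m)) :=
  maximal_hoeffding_bound_general P m X hXmeas hindep hbdd μ hmean x hx
end

section
/- Fix positive integers S and K with 4K ≤ S, and set c = 1 − 1/√3. Let (D_n)_{n=1}^S be i.i.d. random variables taking values in [0,1] with mean μ. Then for every real u with u ≥ 2√(K/S), Σ_{n=1}^S P( X̄(n) + γ_n − μ ≥ u ) ≤ 3·log(S u² / K)/u² + (exp(−12 c² log 2) / (1 − exp(−2 c² u²)))·1(u ≤ 1/c), where 1(·) denotes the indicator. -/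
open MeasureTheory ProbabilityTheory

/-- `log₊(x) = log x` if `x ≥ 1`, and `0` otherwise. -/
noncomputable def logPlus (x : ℝ) : ℝ := if 1 ≤ x then Real.log x else 0



lemma hoeff_pos {m : ℝ} (hm0 : 0 ≤ m) (hm1 : m ≤ 1) (x : ℝ) :
    0 < (1 - m) + m * Real.exp x := by
  rcases le_or_gt (Real.exp x) 1 with h | h
  · nlinarith [Real.exp_pos x, mul_nonneg hm0 (Real.exp_pos x).le,
      mul_nonneg (sub_nonneg.2 hm1) (sub_nonneg.2 h)]
  · nlinarith [mul_le_of_le_one_left (sub_nonneg.2 h.le) hm1]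

lemma hoeff_core {m : ℝ} (hm0 : 0 ≤ m) (hm1 : m ≤ 1) {t : ℝ} (ht : 0 ≤ t) :
    (1 - m) + m * Real.exp t ≤ Real.exp (t * m + t ^ 2 / 8) := by
  have hD := hoeff_pos hm0 hm1
  set F : ℝ → ℝ := fun x => x * m + x ^ 2 / 8 - Real.log ((1 - m) + m * Real.exp x) with hF
  set G : ℝ → ℝ := fun x => m + x / 4 - m * Real.exp x / ((1 - m) + m * Real.exp x) with hG
  have hDder : ∀ x : ℝ, HasDerivAt (fun y : ℝ => (1 - m) + m * Real.exp y) (m * Real.exp x) x := by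
    intro x
    exact (Real.hasDerivAt_exp x).const_mul m |>.const_add (1 - m)
  have hFder : ∀ x : ℝ, HasDerivAt F (G x) x := by
    intro x
    have h2 := (hDder x).log (hD x).ne'
    have h3 : HasDerivAt (fun y : ℝ => y * m + y ^ 2 / 8) (m + x / 4) x := by
      have := ((hasDerivAt_id x).mul_const m).add
        (((hasDerivAt_id x).pow 2).div_const 8)
      convert this using 1
      case e'_4 => rfl
      case e'_5 => rfl
      case e'_8 => rfl
      simp
      ring
    exact h3.sub h2
  have hGder : ∀ x : ℝ, HasDerivAt G
      ((m * Real.exp x / ((1 - m) + m * Real.exp x) - 1 / 2) ^ 2) x := by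
    intro x
    have h1 : HasDerivAt (fun y : ℝ => m * Real.exp y) (m * Real.exp x) x :=
      (Real.hasDerivAt_exp x).const_mul m
    have h3 := h1.div (hDder x) (hD x).ne'
    have h4 : HasDerivAt (fun y : ℝ => m + y / 4) (1 / 4) x := by
      simpa using ((hasDerivAt_id x).div_const 4).const_add m
    have h5 := h4.sub h3
    convert h5 using 1
    case e'_4 => rfl
    case e'_5 => rfl
    case e'_8 => rfl
    have hne := (hD x).ne'
    field_simp
    ring
  have hGmono : Monotone G :=
    monotone_of_deriv_nonneg (fun x => (hGder x).differentiableAt)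
      (fun x => by rw [(hGder x).deriv]; positivity)
  have hG0 : G 0 = 0 := by
    have h1 : (1 - m) + m * Real.exp 0 = 1 := by simp
    simp [hG, h1]
  have hGnn : ∀ x : ℝ, 0 ≤ x → 0 ≤ G x := fun x hx => hG0 ▸ hGmono hx
  have hFmono : MonotoneOn F (Set.Ici 0) := by
    apply monotoneOn_of_deriv_nonneg (convex_Ici 0)
    · have hFdiff : Differentiable ℝ F := fun x => (hFder x).differentiableAt
      exact hFdiff.continuous.continuousOn
    · intro x _
      exact ((hFder x).differentiableAt).differentiableWithinAt
    · intro x hx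
      rw [(hFder x).deriv]
      exact hGnn x (le_of_lt (by simpa using hx))
  have hF0 : F 0 = 0 := by
    have h1 : (1 - m) + m * Real.exp 0 = 1 := by simp
    simp [hF, h1]
  have hFt : 0 ≤ F t := by
    have := hFmono (Set.self_mem_Ici) (Set.mem_Ici.2 ht) ht
    rwa [hF0] at this
  have hlog : Real.log ((1 - m) + m * Real.exp t) ≤ t * m + t ^ 2 / 8 := by
    simp only [hF] at hFt; linarith
  calc (1 - m) + m * Real.exp t = Real.exp (Real.log ((1 - m) + m * Real.exp t)) :=
        (Real.exp_log (hD t)).symm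
    _ ≤ Real.exp (t * m + t ^ 2 / 8) := Real.exp_le_exp.2 hlog

lemma exp_mul_integrable {Ω : Type*} [MeasurableSpace Ω] {P : Measure Ω}
    [IsProbabilityMeasure P] {X : Ω → ℝ} (hX : Measurable X)
    (hb : ∀ᵐ ω ∂P, X ω ∈ Set.Icc (0 : ℝ) 1) {t : ℝ} (ht : 0 ≤ t) :
    Integrable (fun ω => Real.exp (t * X ω)) P := by
  refine (integrable_const (Real.exp t)).mono'
    ((hX.const_mul t).exp.aestronglyMeasurable) ?_
  filter_upwards [hb] with ω hω
  rw [Real.norm_eq_abs, Real.abs_exp]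
  exact Real.exp_le_exp.2 (by nlinarith [hω.1, hω.2])

lemma integrable_of_Icc {Ω : Type*} [MeasurableSpace Ω] {P : Measure Ω}
    [IsProbabilityMeasure P] {X : Ω → ℝ} (hX : Measurable X)
    (hb : ∀ᵐ ω ∂P, X ω ∈ Set.Icc (0 : ℝ) 1) : Integrable X P := by
  refine (integrable_const 1).mono' hX.aestronglyMeasurable ?_
  filter_upwards [hb] with ω hω
  rw [Real.norm_eq_abs, abs_of_nonneg hω.1]
  exact hω.2

lemma hoeff_mgf {Ω : Type*} [MeasurableSpace Ω] {P : Measure Ω} [IsProbabilityMeasure P]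
    {X : Ω → ℝ} (hX : Measurable X) (hb : ∀ᵐ ω ∂P, X ω ∈ Set.Icc (0 : ℝ) 1)
    {t : ℝ} (ht : 0 ≤ t) :
    mgf X P t ≤ Real.exp (t * (∫ ω, X ω ∂P) + t ^ 2 / 8) := by
  have hXint : Integrable X P := integrable_of_Icc hX hb
  have hXexp : Integrable (fun ω => Real.exp (t * X ω)) P := exp_mul_integrable hX hb ht
  set m := ∫ ω, X ω ∂P with hm
  have hm0 : 0 ≤ m := integral_nonneg_of_ae (hb.mono fun ω h => h.1)
  have hm1 : m ≤ 1 := by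
    have := integral_mono_ae hXint (integrable_const 1) (hb.mono fun ω h => h.2)
    simpa using this
  have hpt : ∀ᵐ ω ∂P, Real.exp (t * X ω) ≤ 1 + (Real.exp t - 1) * X ω := by
    filter_upwards [hb] with ω hω
    have hcx := convexOn_exp.2 (Set.mem_univ (0 : ℝ)) (Set.mem_univ t)
      (by linarith [hω.2] : (0:ℝ) ≤ 1 - X ω) hω.1 (by ring)
    simp only [smul_eq_mul, mul_zero, zero_add, Real.exp_zero, mul_one] at hcx
    rw [mul_comm t]
    nlinarith [hcx]
  calc mgf X P t ≤ ∫ ω, (1 + (Real.exp t - 1) * X ω) ∂P := by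
        refine integral_mono_ae hXexp ?_ hpt
        exact (integrable_const 1).add (hXint.const_mul _)
    _ = 1 + (Real.exp t - 1) * m := by
        rw [integral_add (integrable_const 1) (hXint.const_mul _), MeasureTheory.integral_const_mul,
          integral_const]
        simp [hm]
    _ ≤ Real.exp (t * m + t ^ 2 / 8) := by
        have h := hoeff_core hm0 hm1 ht
        nlinarith [h]

lemma chernoff_sum {Ω : Type*} [MeasurableSpace Ω] {P : Measure Ω} [IsProbabilityMeasure P]
    {ι : Type*} {Y : ι → Ω → ℝ} (hmeas : ∀ i, Measurable (Y i))
    (hindep : iIndepFun Y P)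
    (s : Finset ι) {μ : ℝ}
    (hb : ∀ i ∈ s, ∀ᵐ ω ∂P, Y i ω ∈ Set.Icc (0 : ℝ) 1)
    (hm : ∀ i ∈ s, ∫ ω, Y i ω ∂P = μ)
    {ε : ℝ} (hε : 0 ≤ ε) :
    (P {ω | (s.card : ℝ) * (μ + ε) ≤ ∑ i ∈ s, Y i ω}).toReal
      ≤ Real.exp (-2 * s.card * ε ^ 2) := by
  classical
  set t : ℝ := 4 * ε with hts
  have ht : 0 ≤ t := by positivity
  have h_int : ∀ i ∈ s, Integrable (fun ω => Real.exp (t * Y i ω)) P :=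
    fun i hi => exp_mul_integrable (hmeas i) (hb i hi) ht
  have h_int_sum : Integrable (fun ω => Real.exp (t * (∑ i ∈ s, Y i) ω)) P :=
    hindep.integrable_exp_mul_sum hmeas h_int
  have hset : {ω | (s.card : ℝ) * (μ + ε) ≤ ∑ i ∈ s, Y i ω}
      = {ω | (s.card : ℝ) * (μ + ε) ≤ (∑ i ∈ s, Y i) ω} := by
    simp [Finset.sum_apply]
  have hch := measure_ge_le_exp_mul_mgf (μ := P) (X := ∑ i ∈ s, Y i)
    ((s.card : ℝ) * (μ + ε)) ht h_int_sum
  rw [hset]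
  refine hch.trans ?_
  have hmgf : mgf (∑ i ∈ s, Y i) P t ≤ Real.exp ((s.card : ℝ) * (t * μ + t ^ 2 / 8)) := by
    rw [hindep.mgf_sum hmeas s]
    calc ∏ i ∈ s, mgf (Y i) P t ≤ ∏ i ∈ s, Real.exp (t * μ + t ^ 2 / 8) := by
          refine Finset.prod_le_prod (fun i _ => mgf_nonneg) (fun i hi => ?_)
          have := hoeff_mgf (hmeas i) (hb i hi) ht
          rwa [hm i hi] at this
      _ = Real.exp ((s.card : ℝ) * (t * μ + t ^ 2 / 8)) := by
          rw [Finset.prod_const, ← Real.exp_nat_mul]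
  calc Real.exp (-t * ((s.card : ℝ) * (μ + ε))) * mgf (∑ i ∈ s, Y i) P t
      ≤ Real.exp (-t * ((s.card : ℝ) * (μ + ε)))
          * Real.exp ((s.card : ℝ) * (t * μ + t ^ 2 / 8)) := by
        exact mul_le_mul_of_nonneg_left hmgf (Real.exp_pos _).le
    _ = Real.exp (-2 * s.card * ε ^ 2) := by
        rw [← Real.exp_add]
        congr 1
        rw [hts]
        ring

lemma sum_shift {M : Type*} [AddCommMonoid M] {S n : ℕ} (hS : 0 < S) (hn : n ≤ S) (f : ℕ → M) :
    ∑ i ∈ Finset.univ.filter (fun i : Fin S => (i : ℕ) < n), f ((i : ℕ) + 1)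
      = ∑ j ∈ Finset.Icc 1 n, f j := by
  refine Finset.sum_nbij' (fun a : Fin S => (a : ℕ) + 1)
    (fun b : ℕ => (⟨min (b - 1) (S - 1), by omega⟩ : Fin S)) ?_ ?_ ?_ ?_ ?_
  · intro a ha
    simp only [Finset.mem_filter, Finset.mem_univ, true_and] at ha
    simp only [Finset.mem_Icc]
    omega
  · intro b hb
    simp only [Finset.mem_Icc] at hb
    simp only [Finset.mem_filter, Finset.mem_univ, true_and]
    omega
  · intro a ha
    simp only [Finset.mem_filter, Finset.mem_univ, true_and] at ha
    have h := a.isLt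
    apply Fin.ext
    simp
    omega
  · intro b hb
    simp only [Finset.mem_Icc] at hb
    simp
    omega
  · intro a _
    rfl

lemma card_filter_lt {S n : ℕ} (hS : 0 < S) (hn : n ≤ S) :
    (Finset.univ.filter (fun i : Fin S => (i : ℕ) < n)).card = n := by
  have h := sum_shift (M := ℕ) hS hn (fun _ => 1)
  rw [Finset.card_eq_sum_ones, h]
  simp [Nat.card_Icc]


lemma logPlus_le_log {x y : ℝ} (hy : 1 ≤ y) (hxy : x ≤ y) : logPlus x ≤ Real.log y := by
  unfold logPlus
  split
  · exact Real.log_le_log (by linarith) hxy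
  · exact Real.log_nonneg hy

lemma prob_toReal_le_one {Ω : Type*} [MeasurableSpace Ω] (P : Measure Ω)
    [IsProbabilityMeasure P] (E : Set Ω) : (P E).toReal ≤ 1 := by
  have h : P E ≤ 1 := prob_le_one
  simpa using ENNReal.toReal_mono (by simp) h

set_option maxHeartbeats 1600000

/-- Sum over `n = 1, …, S` of the probabilities that the sample-mean-based upper
confidence bound `X̄(n) + γ_n` exceeds the mean `μ` by at least `u`. -/
theorem ucb_overestimate_sum_bound
    {Ω : Type*} [MeasurableSpace Ω] (P : Measure Ω) [IsProbabilityMeasure P]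
    (S K : ℕ) (hK : 0 < K) (hSK : 4 * K ≤ S)
    (c : ℝ) (hc : c = 1 - 1 / Real.sqrt 3)
    (D : ℕ → Ω → ℝ) (hDmeas : ∀ n, Measurable (D n))
    (hindep : iIndepFun (fun n : Fin S => D ((n : ℕ) + 1)) P)
    (hident : ∀ n ∈ Finset.Icc 1 S, IdentDistrib (D n) (D 1) P P)
    (hbdd : ∀ n ∈ Finset.Icc 1 S, ∀ᵐ ω ∂P, D n ω ∈ Set.Icc (0 : ℝ) 1)
    (μ : ℝ) (hmean : ∫ ω, D 1 ω ∂P = μ)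
    (u : ℝ) (hu : 2 * Real.sqrt ((K : ℝ) / S) ≤ u) :
    ∑ n ∈ Finset.Icc 1 S,
      (P {ω | u ≤ (∑ j ∈ Finset.Icc 1 n, D j ω) / n
          + Real.sqrt (logPlus ((S : ℝ) / (K * n)) / n) - μ}).toReal
      ≤ 3 * Real.log ((S : ℝ) * u ^ 2 / K) / u ^ 2
        + (if u ≤ 1 / c then
            Real.exp (-12 * c ^ 2 * Real.log 2) / (1 - Real.exp (-2 * c ^ 2 * u ^ 2))
          else 0) := by
  classical
  have hS : 0 < S := by omega
  have hSr : (0 : ℝ) < S := by exact_mod_cast hS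
  have hKr : (0 : ℝ) < K := by exact_mod_cast hK
  have hu0 : 0 < u := by
    have h1 : 0 < Real.sqrt ((K : ℝ) / S) := Real.sqrt_pos.2 (div_pos hKr hSr)
    linarith
  have h3 : (1 : ℝ) < Real.sqrt 3 := by
    have h30 : (1 : ℝ) = Real.sqrt 1 := Real.sqrt_one.symm
    rw [h30]
    exact Real.sqrt_lt_sqrt (by norm_num) (by norm_num)
  have hc0 : 0 < c := by
    have h4 : 1 / Real.sqrt 3 < 1 := by
      rw [div_lt_one (by linarith)]; exact h3
    rw [hc]; linarith
  have hc1 : c < 1 := by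
    have h4 : 0 < 1 / Real.sqrt 3 := by positivity
    rw [hc]; linarith
  have hu2 : 4 * (K : ℝ) ≤ u ^ 2 * S := by
    have hsq := Real.sq_sqrt (le_of_lt (div_pos hKr hSr))
    have hnn := Real.sqrt_nonneg ((K : ℝ) / S)
    have hww : (K : ℝ) / S * S = K := div_mul_cancel₀ _ hSr.ne'
    have h1 : 0 ≤ (u - 2 * Real.sqrt ((K : ℝ) / S)) * (u + 2 * Real.sqrt ((K : ℝ) / S)) :=
      mul_nonneg (by linarith) (by linarith)
    have h2 : 4 * ((K : ℝ) / S) ≤ u ^ 2 := by nlinarith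
    have h4 := mul_le_mul_of_nonneg_right h2 hSr.le
    nlinarith [h4, hww]
  have hQ4 : (4 : ℝ) ≤ (S : ℝ) * u ^ 2 / K := by
    rw [le_div_iff₀ hKr]
    nlinarith
  set L := Real.log ((S : ℝ) * u ^ 2 / K) with hLdef
  have hlog4 : Real.log 4 ≤ L := Real.log_le_log (by norm_num) hQ4
  have hlog42 : Real.log 4 = 2 * Real.log 2 := by
    rw [show (4 : ℝ) = 2 ^ (2 : ℕ) by norm_num, Real.log_pow]
    push_cast; ring
  have hL1 : 1 < L := by
    have := Real.log_two_gt_d9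
    nlinarith
  have hL0 : 0 < L := by linarith
  set T := 3 * L / u ^ 2 with hTdef
  have hT0 : 0 < T := by positivity
  have h1S : 1 ∈ Finset.Icc 1 S := Finset.mem_Icc.2 ⟨le_refl 1, by omega⟩
  have hμ0 : 0 ≤ μ := hmean ▸ integral_nonneg_of_ae ((hbdd 1 h1S).mono fun ω h => h.1)
  -- deterministic bound on the confidence width for large n
  have hγ : ∀ n : ℕ, n ∈ Finset.Icc 1 S → T ≤ (n : ℝ) →
      Real.sqrt (logPlus ((S : ℝ) / (K * n)) / n) ≤ (1 - c) * u := by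
    intro n hn hTn
    obtain ⟨hn1, hnS⟩ := Finset.mem_Icc.1 hn
    have hnr : (0 : ℝ) < n := by exact_mod_cast hn1
    have h3L : 3 * L ≤ (n : ℝ) * u ^ 2 := by
      rw [hTdef, div_le_iff₀ (by positivity : (0 : ℝ) < u ^ 2)] at hTn
      linarith
    have hnu : 1 ≤ (n : ℝ) * u ^ 2 := by linarith
    have hlp : logPlus ((S : ℝ) / (K * n)) ≤ L := by
      apply logPlus_le_log (by linarith)
      rw [div_le_div_iff₀ (by positivity) hKr]
      nlinarith [mul_le_mul_of_nonneg_left hnu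
        (by positivity : (0 : ℝ) ≤ (S : ℝ) * K)]
    have hdiv : logPlus ((S : ℝ) / (K * n)) / n ≤ u ^ 2 / 3 := by
      rw [div_le_div_iff₀ hnr (by norm_num : (0 : ℝ) < 3)]
      nlinarith
    have hsqrt3 : Real.sqrt 3 * Real.sqrt 3 = 3 := Real.mul_self_sqrt (by norm_num)
    calc Real.sqrt (logPlus ((S : ℝ) / (K * n)) / n) ≤ Real.sqrt (u ^ 2 / 3) :=
          Real.sqrt_le_sqrt hdiv
      _ = (1 - c) * u := by
          have h1c : (1 - c) = 1 / Real.sqrt 3 := by rw [hc]; ring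
          rw [show u ^ 2 / 3 = ((1 - c) * u) ^ 2 by
            rw [h1c, mul_pow, div_pow, one_pow, Real.sq_sqrt (by norm_num : (0:ℝ) ≤ 3)]; ring]
          exact Real.sqrt_sq (mul_nonneg (by linarith) hu0.le)
  obtain ⟨m0, hm0def⟩ : ∃ m : ℕ, m = ⌈T⌉₊ := ⟨⌈T⌉₊, rfl⟩
  -- split the sum at m0
  rw [← Finset.sum_filter_add_sum_filter_not (Finset.Icc 1 S) (fun n => n < m0)]
  have part1 : ∑ n ∈ (Finset.Icc 1 S).filter (fun n => n < m0),
      (P {ω | u ≤ (∑ j ∈ Finset.Icc 1 n, D j ω) / n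
          + Real.sqrt (logPlus ((S : ℝ) / (K * n)) / n) - μ}).toReal ≤ T := by
    calc ∑ n ∈ (Finset.Icc 1 S).filter (fun n => n < m0),
        (P {ω | u ≤ (∑ j ∈ Finset.Icc 1 n, D j ω) / n
            + Real.sqrt (logPlus ((S : ℝ) / (K * n)) / n) - μ}).toReal
        ≤ ∑ n ∈ (Finset.Icc 1 S).filter (fun n => n < m0), (1 : ℝ) :=
          Finset.sum_le_sum (fun n _ => prob_toReal_le_one P _)
      _ = (((Finset.Icc 1 S).filter (fun n => n < m0)).card : ℝ) := by
          rw [Finset.sum_const]; simp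
      _ ≤ T := by
          have hsub : (Finset.Icc 1 S).filter (fun n => n < m0) ⊆ Finset.Ico 1 m0 := by
            intro n hn
            simp only [Finset.mem_filter, Finset.mem_Icc] at hn
            exact Finset.mem_Ico.2 ⟨hn.1.1, hn.2⟩
          have hcard := Finset.card_le_card hsub
          rw [Nat.card_Ico] at hcard
          have hle : ((m0 - 1 : ℕ) : ℝ) ≤ T := by
            rcases Nat.eq_zero_or_pos m0 with h0 | h0
            · simp [h0]; exact hT0.le
            · rw [Nat.cast_sub h0]
              have := Nat.ceil_lt_add_one hT0.le
              rw [hm0def]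
              push_cast
              linarith
          calc (((Finset.Icc 1 S).filter (fun n => n < m0)).card : ℝ)
              ≤ ((m0 - 1 : ℕ) : ℝ) := by exact_mod_cast hcard
            _ ≤ T := hle
  -- for n ≥ m0, T ≤ n and events are contained in Chernoff events
  have hTle : ∀ n ∈ (Finset.Icc 1 S).filter (fun n => ¬ n < m0), T ≤ (n : ℝ) := by
    intro n hn
    simp only [Finset.mem_filter, not_lt] at hn
    have : ⌈T⌉₊ ≤ n := hm0def ▸ hn.2
    exact le_trans (Nat.le_ceil T) (by exact_mod_cast this)
  have hsubev : ∀ n ∈ (Finset.Icc 1 S).filter (fun n => ¬ n < m0),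
      {ω | u ≤ (∑ j ∈ Finset.Icc 1 n, D j ω) / n
          + Real.sqrt (logPlus ((S : ℝ) / (K * n)) / n) - μ}
        ⊆ {ω | (n : ℝ) * (μ + c * u) ≤ ∑ j ∈ Finset.Icc 1 n, D j ω} := by
    intro n hn ω hω
    have hnIcc := (Finset.mem_filter.1 hn).1
    obtain ⟨hn1, hnS⟩ := Finset.mem_Icc.1 hnIcc
    have hnr : (0 : ℝ) < n := by exact_mod_cast hn1
    have hγn := hγ n hnIcc (hTle n hn)
    simp only [Set.mem_setOf_eq] at hω ⊢
    have hmean' : μ + c * u ≤ (∑ j ∈ Finset.Icc 1 n, D j ω) / n := by nlinarith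
    calc (n : ℝ) * (μ + c * u) ≤ (n : ℝ) * ((∑ j ∈ Finset.Icc 1 n, D j ω) / n) :=
          mul_le_mul_of_nonneg_left hmean' hnr.le
      _ = ∑ j ∈ Finset.Icc 1 n, D j ω := by field_simp
  by_cases hcase : u ≤ 1 / c
  · rw [if_pos hcase]
    have key : ∀ n ∈ (Finset.Icc 1 S).filter (fun n => ¬ n < m0),
        (P {ω | u ≤ (∑ j ∈ Finset.Icc 1 n, D j ω) / n
            + Real.sqrt (logPlus ((S : ℝ) / (K * n)) / n) - μ}).toReal
          ≤ Real.exp (-2 * c ^ 2 * u ^ 2) ^ n := by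
      intro n hn
      have hnIcc := (Finset.mem_filter.1 hn).1
      obtain ⟨hn1, hnS⟩ := Finset.mem_Icc.1 hnIcc
      set s : Finset (Fin S) := Finset.univ.filter (fun i : Fin S => (i : ℕ) < n) with hsdef
      have hcard : s.card = n := card_filter_lt hS hnS
      have hmemIcc : ∀ i : Fin S, i ∈ s → ((i : ℕ) + 1) ∈ Finset.Icc 1 S := by
        intro i hi
        exact Finset.mem_Icc.2 ⟨by omega, by omega⟩
      have hch := chernoff_sum (Y := fun i : Fin S => D ((i : ℕ) + 1))
        (fun i => hDmeas _) hindep s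
        (fun i hi => hbdd _ (hmemIcc i hi))
        (fun i hi => ((hident _ (hmemIcc i hi)).integral_eq).trans hmean)
        (mul_nonneg hc0.le hu0.le)
      have hsum_eq : ∀ ω, ∑ i ∈ s, D ((i : ℕ) + 1) ω = ∑ j ∈ Finset.Icc 1 n, D j ω :=
        fun ω => sum_shift hS hnS (fun j => D j ω)
      have hev2 : {ω | (n : ℝ) * (μ + c * u) ≤ ∑ j ∈ Finset.Icc 1 n, D j ω}
          = {ω | (s.card : ℝ) * (μ + c * u) ≤ ∑ i ∈ s, D ((i : ℕ) + 1) ω} := by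
        ext ω
        simp only [Set.mem_setOf_eq, hcard, hsum_eq ω]
      have hmono : (P {ω | u ≤ (∑ j ∈ Finset.Icc 1 n, D j ω) / n
            + Real.sqrt (logPlus ((S : ℝ) / (K * n)) / n) - μ}).toReal
          ≤ (P {ω | (s.card : ℝ) * (μ + c * u) ≤ ∑ i ∈ s, D ((i : ℕ) + 1) ω}).toReal := by
        refine ENNReal.toReal_mono (measure_ne_top P _) ?_
        refine measure_mono ?_
        rw [← hev2]
        exact hsubev n hn
      refine hmono.trans (hch.trans ?_)
      rw [hcard, ← Real.exp_nat_mul]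
      exact le_of_eq (by congr 1; ring)
    have geom : ∑ n ∈ (Finset.Icc 1 S).filter (fun n => ¬ n < m0),
        Real.exp (-2 * c ^ 2 * u ^ 2) ^ n
          ≤ Real.exp (-12 * c ^ 2 * Real.log 2)
              / (1 - Real.exp (-2 * c ^ 2 * u ^ 2)) := by
      set r : ℝ := Real.exp (-2 * c ^ 2 * u ^ 2) with hrdef
      have hr0 : 0 < r := Real.exp_pos _
      have hr1 : r < 1 := by
        rw [hrdef, Real.exp_lt_one_iff]
        nlinarith [mul_pos (pow_pos hc0 2) (pow_pos hu0 2)]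
      have hsub : (Finset.Icc 1 S).filter (fun n => ¬ n < m0) ⊆ Finset.Ico m0 (S + 1) := by
        intro n hn
        simp only [Finset.mem_filter, Finset.mem_Icc, not_lt] at hn
        exact Finset.mem_Ico.2 ⟨hn.2, by omega⟩
      have h1 : ∑ n ∈ (Finset.Icc 1 S).filter (fun n => ¬ n < m0), r ^ n
          ≤ ∑ n ∈ Finset.Ico m0 (S + 1), r ^ n :=
        Finset.sum_le_sum_of_subset_of_nonneg hsub (fun n _ _ => pow_nonneg hr0.le n)
      have h2 : ∑ n ∈ Finset.Ico m0 (S + 1), r ^ n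
          = r ^ m0 * ∑ i ∈ Finset.range (S + 1 - m0), r ^ i := by
        rw [Finset.sum_Ico_eq_sum_range, Finset.mul_sum]
        exact Finset.sum_congr rfl (fun i _ => by rw [pow_add])
      have h3 : ∑ i ∈ Finset.range (S + 1 - m0), r ^ i ≤ 1 / (1 - r) := by
        rw [le_div_iff₀ (by linarith : (0 : ℝ) < 1 - r)]
        have hgs := geom_sum_mul r (S + 1 - m0)
        nlinarith [pow_nonneg hr0.le (S + 1 - m0)]
      have h4 : r ^ m0 ≤ Real.exp (-12 * c ^ 2 * Real.log 2) := by
        rw [hrdef, ← Real.exp_nat_mul, Real.exp_le_exp]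
        have hm0T : T ≤ (m0 : ℝ) := hm0def ▸ Nat.le_ceil T
        have hTu : u ^ 2 * T = 3 * L := by
          rw [hTdef]; field_simp
        nlinarith [sq_nonneg c, sq_nonneg u, mul_le_mul_of_nonneg_left hm0T
          (by positivity : (0 : ℝ) ≤ 2 * c ^ 2 * u ^ 2), hlog4, hlog42]
      calc ∑ n ∈ (Finset.Icc 1 S).filter (fun n => ¬ n < m0), r ^ n
          ≤ r ^ m0 * ∑ i ∈ Finset.range (S + 1 - m0), r ^ i := by rw [← h2]; exact h1
        _ ≤ r ^ m0 * (1 / (1 - r)) :=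
            mul_le_mul_of_nonneg_left h3 (pow_nonneg hr0.le m0)
        _ ≤ Real.exp (-12 * c ^ 2 * Real.log 2) * (1 / (1 - r)) := by
            have hpos : (0:ℝ) < 1 - r := by linarith
            exact mul_le_mul_of_nonneg_right h4 (by positivity)
        _ = Real.exp (-12 * c ^ 2 * Real.log 2) / (1 - r) := by ring
    exact add_le_add part1 ((Finset.sum_le_sum key).trans geom)
  · rw [if_neg hcase]
    have hzero : ∀ n ∈ (Finset.Icc 1 S).filter (fun n => ¬ n < m0),
        (P {ω | u ≤ (∑ j ∈ Finset.Icc 1 n, D j ω) / n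
            + Real.sqrt (logPlus ((S : ℝ) / (K * n)) / n) - μ}).toReal = 0 := by
      intro n hn
      have hnIcc := (Finset.mem_filter.1 hn).1
      obtain ⟨hn1, hnS⟩ := Finset.mem_Icc.1 hnIcc
      have hnr : (0 : ℝ) < n := by exact_mod_cast hn1
      have hγn := hγ n hnIcc (hTle n hn)
      have hcu : 1 < c * u := by
        rw [not_le, div_lt_iff₀ hc0] at hcase
        linarith [hcase]
      have hgood : ∀ᵐ ω ∂P, ∀ j : ℕ, j ∈ Finset.Icc 1 n → D j ω ∈ Set.Icc (0 : ℝ) 1 := by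
        rw [MeasureTheory.ae_all_iff]
        intro j
        by_cases hj : j ∈ Finset.Icc 1 n
        · have hjS : j ∈ Finset.Icc 1 S := by
            simp only [Finset.mem_Icc] at hj ⊢; omega
          filter_upwards [hbdd j hjS] with ω h _
          exact h
        · exact MeasureTheory.ae_of_all _ (fun ω hmem => absurd hmem hj)
      have hnull : P {ω | ¬ ∀ j : ℕ, j ∈ Finset.Icc 1 n → D j ω ∈ Set.Icc (0 : ℝ) 1} = 0 :=
        MeasureTheory.ae_iff.1 hgood
      have hsubnull : {ω | u ≤ (∑ j ∈ Finset.Icc 1 n, D j ω) / n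
            + Real.sqrt (logPlus ((S : ℝ) / (K * n)) / n) - μ}
          ⊆ {ω | ¬ ∀ j : ℕ, j ∈ Finset.Icc 1 n → D j ω ∈ Set.Icc (0 : ℝ) 1} := by
        intro ω hω hQ
        simp only [Set.mem_setOf_eq] at hω
        have hsum : ∑ j ∈ Finset.Icc 1 n, D j ω ≤ (n : ℝ) := by
          calc ∑ j ∈ Finset.Icc 1 n, D j ω ≤ ∑ j ∈ Finset.Icc 1 n, (1 : ℝ) :=
                Finset.sum_le_sum (fun j hj => (hQ j hj).2)
            _ = (n : ℝ) := by rw [Finset.sum_const]; simp [Nat.card_Icc]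
        have hdivle : (∑ j ∈ Finset.Icc 1 n, D j ω) / n ≤ 1 :=
          (div_le_one hnr).2 hsum
        nlinarith
      have : P {ω | u ≤ (∑ j ∈ Finset.Icc 1 n, D j ω) / n
            + Real.sqrt (logPlus ((S : ℝ) / (K * n)) / n) - μ} = 0 :=
        measure_mono_null hsubnull hnull
      rw [this]
      simp
    rw [Finset.sum_eq_zero hzero]
    linarith [part1]
end

section
/- Fix positive integers S and K with 4K ≤ S, and set c = 1 − 1/√3. Let (D_n)_{n=1}^S be i.i.d. random variables taking values in [0,1] with mean μ. Then for every real u with u ≥ 2√(K/S), Σ_{n=1}^S P( μ − X̄(n) + γ_n ≥ u ) ≤ 3·log(S u² / K)/u² + (exp(−12 c² log 2) / (1 − exp(−2 c² u²)))·1(u ≤ 1/c), where 1(·) denotes the indicator. -/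
open MeasureTheory ProbabilityTheory

set_option maxHeartbeats 1000000

section Aux
open Real MeasureTheory ProbabilityTheory

lemma hoeffding_aux {p : ℝ} (hp0 : 0 ≤ p) (hp1 : p ≤ 1) (t : ℝ) :
    1 - p + p * Real.exp t ≤ Real.exp (t * p + t ^ 2 / 8) := by
  set A : ℝ → ℝ := fun s => 1 - p + p * Real.exp s with hAdef
  have hA0 : ∀ s, 0 < A s := by
    intro s
    have he := Real.exp_pos s
    simp only [hAdef]
    rcases eq_or_lt_of_le hp0 with h | h
    · simp [← h]
    · nlinarith
  set g : ℝ → ℝ := fun s => p * Real.exp s / A s with hgdef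
  have hg0 : ∀ s, 0 ≤ g s := fun s => div_nonneg (by positivity) (hA0 s).le
  have hg1 : ∀ s, g s ≤ 1 := by
    intro s
    rw [hgdef, div_le_one (hA0 s)]
    simp only [hAdef]; nlinarith [Real.exp_pos s]
  have hAder : ∀ s, HasDerivAt A (p * Real.exp s) s := by
    intro s
    exact ((Real.hasDerivAt_exp s).const_mul p).const_add (1 - p)
  have hgder : ∀ s, HasDerivAt g (g s * (1 - g s)) s := by
    intro s
    have h := ((Real.hasDerivAt_exp s).const_mul p).div (hAder s) (hA0 s).ne'
    refine h.congr_deriv ?_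
    have := (hA0 s).ne'
    simp only [hgdef]
    field_simp
  set φ : ℝ → ℝ := fun s => g s - p - s / 4 with hφdef
  have hφder : ∀ s, HasDerivAt φ (g s * (1 - g s) - 1 / 4) s := by
    intro s
    exact ((hgder s).sub_const p).sub ((hasDerivAt_id s).div_const 4)
  have hφ0 : φ 0 = 0 := by
    simp only [hφdef, hgdef, hAdef]
    simp
  have hφanti : Antitone φ := by
    refine antitone_of_deriv_nonpos (fun s => (hφder s).differentiableAt) ?_
    intro s
    rw [(hφder s).deriv]
    nlinarith [hg0 s, hg1 s, sq_nonneg (g s - 1/2)]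
  set f : ℝ → ℝ := fun s => Real.log (A s) - (s * p + s ^ 2 / 8) with hfdef
  have hfder : ∀ s, HasDerivAt f (φ s) s := by
    intro s
    have h1 : HasDerivAt (fun s => Real.log (A s)) (p * Real.exp s / A s) s :=
      (hAder s).log (hA0 s).ne'
    have h2 : HasDerivAt (fun s : ℝ => s * p + s ^ 2 / 8) (p + s / 4) s := by
      have := ((hasDerivAt_id s).mul_const p).add ((hasDerivAt_pow 2 s).div_const 8)
      refine this.congr_deriv ?_
      ring
    have := h1.sub h2
    refine this.congr_deriv ?_
    simp only [hφdef, hgdef]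
    ring
  have hf0 : f 0 = 0 := by simp [hfdef, hAdef]
  have hfle : ∀ s, f s ≤ 0 := by
    intro s
    rcases le_total s 0 with hs | hs
    · have hmono : MonotoneOn f (Set.Iic (0 : ℝ)) := by
        refine monotoneOn_of_deriv_nonneg (convex_Iic 0)
          (Continuous.continuousOn (by
            exact continuous_iff_continuousAt.2 fun x => (hfder x).continuousAt)) ?_ ?_
        · intro x _; exact (hfder x).differentiableAt.differentiableWithinAt
        · intro x hx
          rw [(hfder x).deriv]
          rw [interior_Iic] at hx
          have : φ 0 ≤ φ x := hφanti (le_of_lt hx)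
          linarith [hφ0 ▸ this]
      have := hmono (Set.mem_Iic.2 hs) (Set.mem_Iic.2 le_rfl) hs
      linarith [hf0 ▸ this]
    · have hanti : AntitoneOn f (Set.Ici (0 : ℝ)) := by
        refine antitoneOn_of_deriv_nonpos (convex_Ici 0)
          (Continuous.continuousOn (by
            exact continuous_iff_continuousAt.2 fun x => (hfder x).continuousAt)) ?_ ?_
        · intro x _; exact (hfder x).differentiableAt.differentiableWithinAt
        · intro x hx
          rw [(hfder x).deriv]
          rw [interior_Ici] at hx
          have : φ x ≤ φ 0 := hφanti (le_of_lt hx)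
          linarith [hφ0 ▸ this]
      have := hanti (Set.mem_Ici.2 le_rfl) (Set.mem_Ici.2 hs) hs
      linarith [hf0 ▸ this]
  have := hfle t
  have hlog : Real.log (A t) ≤ t * p + t ^ 2 / 8 := by
    simpa [hfdef, sub_nonpos] using this
  calc 1 - p + p * Real.exp t = A t := rfl
    _ ≤ Real.exp (t * p + t ^ 2 / 8) := (Real.log_le_iff_le_exp (hA0 t)).1 hlog


lemma exp_le_aux {x : ℝ} (t : ℝ) (h0 : 0 ≤ x) (h1 : x ≤ 1) :
    Real.exp (t * x) ≤ 1 - x + x * Real.exp t := by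
  have := convexOn_exp.2 (Set.mem_univ (0 : ℝ)) (Set.mem_univ t)
    (by linarith : (0:ℝ) ≤ 1 - x) h0 (by ring)
  simpa [smul_eq_mul, mul_comm] using this


lemma mgf_single {Ω : Type*} [MeasurableSpace Ω] (P : Measure Ω) [IsProbabilityMeasure P]
    (X : Ω → ℝ) (hm : Measurable X) (hb : ∀ᵐ ω ∂P, X ω ∈ Set.Icc (0:ℝ) 1)
    (μ : ℝ) (hμ : ∫ ω, X ω ∂P = μ) (t : ℝ) :
    ∫ ω, Real.exp (t * (μ - X ω)) ∂P ≤ Real.exp (t ^ 2 / 8) := by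
  have hint : Integrable X P :=
    ⟨hm.aestronglyMeasurable, HasFiniteIntegral.of_bounded (C := 1)
      (hb.mono fun ω h => by
        rw [Real.norm_eq_abs]; exact abs_le.2 ⟨by linarith [h.1], h.2⟩)⟩
  have hμ0 : 0 ≤ μ := hμ ▸ integral_nonneg_of_ae (hb.mono fun ω h => h.1)
  have hμ1 : μ ≤ 1 := by
    have := integral_mono_ae hint (integrable_const (1:ℝ)) (hb.mono fun ω h => h.2)
    simpa [hμ] using this
  have hbd : ∀ᵐ ω ∂P, Real.exp (t * (μ - X ω)) ≤
      Real.exp (t * μ) * (1 - X ω + X ω * Real.exp (-t)) := by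
    refine hb.mono fun ω h => ?_
    have h1 : Real.exp (t * (μ - X ω)) = Real.exp (t * μ) * Real.exp (-t * X ω) := by
      rw [← Real.exp_add]; ring_nf
    rw [h1]
    exact mul_le_mul_of_nonneg_left (exp_le_aux (-t) h.1 h.2) (Real.exp_pos _).le
  have hintR : Integrable (fun ω => Real.exp (t * μ) * (1 - X ω + X ω * Real.exp (-t))) P :=
    (((integrable_const (1:ℝ)).sub hint).add (hint.mul_const _)).const_mul _
  have hintL : Integrable (fun ω => Real.exp (t * (μ - X ω))) P := by
    refine ⟨(((measurable_const.sub hm).const_mul t).exp).aestronglyMeasurable,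
      HasFiniteIntegral.of_bounded (C := Real.exp |t|) (hb.mono fun ω h => ?_)⟩
    rw [Real.norm_eq_abs, abs_of_pos (Real.exp_pos _)]
    apply Real.exp_le_exp.2
    calc t * (μ - X ω) ≤ |t * (μ - X ω)| := le_abs_self _
      _ = |t| * |μ - X ω| := abs_mul _ _
      _ ≤ |t| * 1 := by
          refine mul_le_mul_of_nonneg_left ?_ (abs_nonneg t)
          rw [abs_le]; constructor <;> [linarith [h.2]; linarith [h.1]]
      _ = |t| := mul_one _
  calc ∫ ω, Real.exp (t * (μ - X ω)) ∂P
      ≤ ∫ ω, Real.exp (t * μ) * (1 - X ω + X ω * Real.exp (-t)) ∂P :=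
        integral_mono_ae hintL hintR hbd
    _ = Real.exp (t * μ) * (1 - μ + μ * Real.exp (-t)) := by
        have i1 : Integrable (fun a => 1 - X a) P := (integrable_const 1).sub hint
        have i2 : Integrable (fun a => X a * Real.exp (-t)) P := hint.mul_const _
        rw [integral_const_mul, integral_add i1 i2, integral_sub (integrable_const _) hint,
          integral_mul_const, hμ]
        simp
    _ ≤ Real.exp (t * μ) * Real.exp ((-t) * μ + (-t) ^ 2 / 8) :=
        mul_le_mul_of_nonneg_left (hoeffding_aux hμ0 hμ1 (-t)) (Real.exp_pos _).le
    _ = Real.exp (t ^ 2 / 8) := by rw [← Real.exp_add]; ring_nf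


lemma hoeffding_sum {Ω : Type*} [MeasurableSpace Ω] (P : Measure Ω) [IsProbabilityMeasure P]
    (S : ℕ) (D : ℕ → Ω → ℝ) (hDmeas : ∀ n, Measurable (D n))
    (hindep : iIndepFun (fun n : Fin S => D ((n : ℕ) + 1)) P)
    (hident : ∀ n ∈ Finset.Icc 1 S, IdentDistrib (D n) (D 1) P P)
    (hbdd : ∀ n ∈ Finset.Icc 1 S, ∀ᵐ ω ∂P, D n ω ∈ Set.Icc (0 : ℝ) 1)
    (μ : ℝ) (hmean : ∫ ω, D 1 ω ∂P = μ)
    (n : ℕ) (hn1 : 1 ≤ n) (hnS : n ≤ S) (ε : ℝ) (hε : 0 ≤ ε) :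
    (P {ω | ε ≤ μ - (∑ j ∈ Finset.Icc 1 n, D j ω) / n}).toReal
      ≤ Real.exp (-2 * n * ε ^ 2) := by
  classical
  set Y : Fin S → Ω → ℝ := fun i ω => μ - D ((i : ℕ) + 1) ω with hYdef
  have hYmeas : ∀ i, Measurable (Y i) := fun i => measurable_const.sub (hDmeas _)
  have hYindep : iIndepFun Y P :=
    hindep.comp (fun _ x => μ - x) (fun _ => measurable_const.sub measurable_id)
  set s : Finset (Fin S) := Finset.univ.filter (fun i => (i : ℕ) < n) with hsdef
  have hmem : ∀ j ∈ Finset.Icc 1 n, j ∈ Finset.Icc 1 S := by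
    intro j hj; simp only [Finset.mem_Icc] at *; omega
  -- reindexing
  have hsum : ∀ (f : ℕ → ℝ), ∑ i ∈ s, f ((i : ℕ) + 1) = ∑ j ∈ Finset.Icc 1 n, f j := by
    intro f
    refine Finset.sum_bij' (fun i _ => (i : ℕ) + 1)
      (fun j hj => (⟨j - 1, by simp only [Finset.mem_Icc] at hj; omega⟩ : Fin S))
      ?_ ?_ ?_ ?_ ?_
    · intro a ha
      simp only [hsdef, Finset.mem_filter] at ha
      simp only [Finset.mem_Icc]; omega
    · intro a ha
      simp only [Finset.mem_Icc] at ha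
      simp only [hsdef, Finset.mem_filter, Finset.mem_univ, true_and]; omega
    · intro a ha
      simp only [hsdef, Finset.mem_filter] at ha
      ext; simp
    · intro a ha
      simp only [Finset.mem_Icc] at ha
      simp only []; omega
    · intro a _; rfl
  have hcard : s.card = n := by
    have h := hsum (fun _ => (1 : ℝ))
    simp only [Finset.sum_const, nsmul_eq_mul, mul_one, Nat.card_Icc] at h
    exact_mod_cast h
  have h1S : 1 ∈ Finset.Icc 1 S := by simp only [Finset.mem_Icc]; omega
  have hD1int : Integrable (D 1) P :=
    ⟨(hDmeas 1).aestronglyMeasurable, HasFiniteIntegral.of_bounded (C := 1)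
      ((hbdd 1 h1S).mono fun ω h => by
        rw [Real.norm_eq_abs]; exact abs_le.2 ⟨by linarith [h.1], h.2⟩)⟩
  have hμ0 : 0 ≤ μ := hmean ▸ integral_nonneg_of_ae ((hbdd 1 h1S).mono fun ω h => h.1)
  have hμ1 : μ ≤ 1 := by
    have := integral_mono_ae hD1int (integrable_const (1:ℝ)) ((hbdd 1 h1S).mono fun ω h => h.2)
    simpa [hmean] using this
  have hYbd : ∀ i : Fin S, ∀ᵐ ω ∂P, |Y i ω| ≤ 1 := by
    intro i
    have hi : (i : ℕ) + 1 ∈ Finset.Icc 1 S := by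
      simp only [Finset.mem_Icc]; omega
    exact (hbdd _ hi).mono fun ω h => by
      rw [hYdef]; simp only []
      exact abs_le.2 ⟨by linarith [h.2], by linarith [h.1]⟩
  set t : ℝ := 4 * ε with htdef
  have ht0 : 0 ≤ t := by positivity
  have hYint : ∀ i : Fin S, Integrable (fun ω => Real.exp (t * Y i ω)) P := by
    intro i
    refine ⟨(((hYmeas i).const_mul t).exp).aestronglyMeasurable,
      HasFiniteIntegral.of_bounded (C := Real.exp t) ((hYbd i).mono fun ω h => ?_)⟩
    rw [Real.norm_eq_abs, abs_of_pos (Real.exp_pos _)]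
    apply Real.exp_le_exp.2
    calc t * Y i ω ≤ |t * Y i ω| := le_abs_self _
      _ = t * |Y i ω| := by rw [abs_mul, abs_of_nonneg ht0]
      _ ≤ t * 1 := mul_le_mul_of_nonneg_left h ht0
      _ = t := mul_one _
  have hint : Integrable (fun ω => Real.exp (t * (∑ i ∈ s, Y i) ω)) P :=
    hYindep.integrable_exp_mul_sum hYmeas (fun i _ => hYint i)
  have hset : {ω | ε ≤ μ - (∑ j ∈ Finset.Icc 1 n, D j ω) / n}
      = {ω | (n : ℝ) * ε ≤ (∑ i ∈ s, Y i) ω} := by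
    ext ω
    have hsY : (∑ i ∈ s, Y i) ω = n * μ - ∑ j ∈ Finset.Icc 1 n, D j ω := by
      rw [Finset.sum_apply]
      simp only [hYdef]
      rw [Finset.sum_sub_distrib, Finset.sum_const, hcard, hsum (fun j => D j ω)]
      simp [mul_comm]
    have hn0 : (0 : ℝ) < n := by exact_mod_cast hn1
    simp only [Set.mem_setOf_eq, hsY]
    have hQ : (∑ j ∈ Finset.Icc 1 n, D j ω) / n * n = ∑ j ∈ Finset.Icc 1 n, D j ω :=
      div_mul_cancel₀ _ hn0.ne'
    constructor <;> intro h <;> nlinarith [hQ]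
  have hmgf : mgf (∑ i ∈ s, Y i) P t ≤ Real.exp (t ^ 2 / 8) ^ n := by
    rw [hYindep.mgf_sum hYmeas s]
    calc ∏ i ∈ s, mgf (Y i) P t ≤ ∏ i ∈ s, Real.exp (t ^ 2 / 8) := by
          refine Finset.prod_le_prod (fun i _ => mgf_nonneg) (fun i _ => ?_)
          have hi : (i : ℕ) + 1 ∈ Finset.Icc 1 S := by simp only [Finset.mem_Icc]; omega
          have hμi : ∫ ω, D ((i : ℕ) + 1) ω ∂P = μ := by
            rw [(hident _ hi).integral_eq, hmean]
          exact mgf_single P (D ((i : ℕ) + 1)) (hDmeas _) (hbdd _ hi) μ hμi t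
      _ = Real.exp (t ^ 2 / 8) ^ n := by rw [Finset.prod_const, hcard]
  calc (P {ω | ε ≤ μ - (∑ j ∈ Finset.Icc 1 n, D j ω) / n}).toReal
      = (P {ω | (n : ℝ) * ε ≤ (∑ i ∈ s, Y i) ω}).toReal := by rw [hset]
    _ ≤ Real.exp (-t * ((n : ℝ) * ε)) * mgf (∑ i ∈ s, Y i) P t :=
        measure_ge_le_exp_mul_mgf _ ht0 hint
    _ ≤ Real.exp (-t * ((n : ℝ) * ε)) * Real.exp (t ^ 2 / 8) ^ n :=
        mul_le_mul_of_nonneg_left hmgf (Real.exp_pos _).le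
    _ = Real.exp (-2 * n * ε ^ 2) := by
        rw [← Real.exp_nat_mul, ← Real.exp_add]
        congr 1
        rw [htdef]; ring


lemma geom_tail {r : ℝ} (h0 : 0 ≤ r) (h1 : r < 1) (a b : ℕ) :
    ∑ n ∈ Finset.Icc a b, r ^ n ≤ r ^ a / (1 - r) := by
  rcases le_or_gt a b with hab | hab
  · rw [← Finset.Ico_add_one_right_eq_Icc, Finset.sum_Ico_eq_sum_range]
    have h2 : ∑ i ∈ Finset.range (b + 1 - a), r ^ (a + i)
        = r ^ a * ∑ i ∈ Finset.range (b + 1 - a), r ^ i := by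
      rw [Finset.mul_sum]
      exact Finset.sum_congr rfl fun i _ => pow_add r a i
    rw [h2, div_eq_mul_inv]
    refine mul_le_mul_of_nonneg_left ?_ (pow_nonneg h0 a)
    rw [geom_sum_eq h1.ne _]
    have hr : (0:ℝ) < 1 - r := by linarith
    have hpow : (0:ℝ) ≤ r ^ (b + 1 - a) := pow_nonneg h0 _
    have heq : (r ^ (b + 1 - a) - 1) / (r - 1) = (1 - r ^ (b + 1 - a)) / (1 - r) := by
      rw [div_eq_div_iff (by linarith) (by linarith)]; ring
    rw [heq, div_le_iff₀ hr, inv_mul_cancel₀ hr.ne']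
    linarith
  · rw [Finset.Icc_eq_empty (by omega)]
    simp only [Finset.sum_empty]
    have hr : (0:ℝ) < 1 - r := by linarith
    positivity


end Aux

/-- Sum over `n = 1, …, S` of the probabilities that the sample-mean-based lower
confidence bound `X̄(n) − γ_n` falls below the mean `μ` by at least `u`, i.e. that
`μ − X̄(n) + γ_n ≥ u`. -/
theorem lcb_underestimate_sum_bound
    {Ω : Type*} [MeasurableSpace Ω] (P : Measure Ω) [IsProbabilityMeasure P]
    (S K : ℕ) (hK : 0 < K) (hSK : 4 * K ≤ S)
    (c : ℝ) (hc : c = 1 - 1 / Real.sqrt 3)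
    (D : ℕ → Ω → ℝ) (hDmeas : ∀ n, Measurable (D n))
    (hindep : iIndepFun (fun n : Fin S => D ((n : ℕ) + 1)) P)
    (hident : ∀ n ∈ Finset.Icc 1 S, IdentDistrib (D n) (D 1) P P)
    (hbdd : ∀ n ∈ Finset.Icc 1 S, ∀ᵐ ω ∂P, D n ω ∈ Set.Icc (0 : ℝ) 1)
    (μ : ℝ) (hmean : ∫ ω, D 1 ω ∂P = μ)
    (u : ℝ) (hu : 2 * Real.sqrt ((K : ℝ) / S) ≤ u) :
    ∑ n ∈ Finset.Icc 1 S,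
      (P {ω | u ≤ μ - (∑ j ∈ Finset.Icc 1 n, D j ω) / n
          + Real.sqrt (logPlus ((S : ℝ) / (K * n)) / n)}).toReal
      ≤ 3 * Real.log ((S : ℝ) * u ^ 2 / K) / u ^ 2
        + (if u ≤ 1 / c then
            Real.exp (-12 * c ^ 2 * Real.log 2) / (1 - Real.exp (-2 * c ^ 2 * u ^ 2))
          else 0) := by
  classical
  have hS0 : 0 < S := by omega
  have hS0' : (0:ℝ) < S := by exact_mod_cast hS0
  have hK0' : (0:ℝ) < K := by exact_mod_cast hK
  -- basic facts about u
  have hu0 : 0 < u := lt_of_lt_of_le (by positivity) hu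
  have hKS : (0:ℝ) ≤ (K:ℝ) / S := by positivity
  have hsq : (2 * Real.sqrt ((K:ℝ)/S)) ^ 2 = 4 * ((K:ℝ)/S) := by
    rw [mul_pow, Real.sq_sqrt hKS]; ring
  have hu2 : 4 * ((K:ℝ)/S) ≤ u ^ 2 := by
    rw [← hsq]; exact pow_le_pow_left₀ (by positivity) hu 2
  have hu2' : 4 * (K:ℝ) ≤ S * u ^ 2 := by
    have e : (S:ℝ) * (4 * ((K:ℝ)/S)) = 4 * K := by field_simp
    nlinarith [mul_le_mul_of_nonneg_left hu2 hS0'.le]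
  -- facts about c
  have h3 : (1:ℝ) < Real.sqrt 3 := by
    have : Real.sqrt 1 < Real.sqrt 3 := Real.sqrt_lt_sqrt (by norm_num) (by norm_num)
    simpa using this
  have hc0 : 0 < c := by
    rw [hc]; have : 1 / Real.sqrt 3 < 1 := by rw [div_lt_one (by linarith)]; exact h3
    linarith
  have hc1 : c < 1 := by
    rw [hc]; have : 0 < 1 / Real.sqrt 3 := by positivity
    linarith
  -- L
  set L : ℝ := Real.log ((S:ℝ) * u ^ 2 / K) with hLdef
  have hL4 : Real.log 4 ≤ L := by
    refine Real.log_le_log (by norm_num) ?_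
    rw [le_div_iff₀ hK0']; linarith
  have hlog4 : Real.log 4 = 2 * Real.log 2 := by
    rw [show (4:ℝ) = 2 ^ 2 by norm_num, Real.log_pow]; push_cast; ring
  have hlog2 : (0.6931471803 : ℝ) < Real.log 2 := Real.log_two_gt_d9
  have hL0 : 0 < L := lt_of_lt_of_le (by rw [hlog4]; linarith) hL4
  set n₀ : ℕ := ⌊3 * L / u ^ 2⌋₊ with hn₀def
  have hn₀le : (n₀ : ℝ) ≤ 3 * L / u ^ 2 := Nat.floor_le (by positivity)
  have hn₀lt : 3 * L / u ^ 2 < (n₀ : ℝ) + 1 := Nat.lt_floor_add_one _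
  -- for n > n₀ : gamma_n ≤ (1 - c) * u  and the event inclusion
  have hgam : ∀ n : ℕ, n₀ < n → 1 ≤ n →
      Real.sqrt (logPlus ((S:ℝ) / (K * n)) / n) ≤ (1 - c) * u := by
    intro n hn hn1
    have hn0' : (0:ℝ) < n := by exact_mod_cast hn1
    have hnn : 3 * L / u ^ 2 < (n:ℝ) := lt_of_lt_of_le hn₀lt (by exact_mod_cast hn)
    have hnu2 : 3 * L < (n:ℝ) * u ^ 2 := by
      rw [div_lt_iff₀ (by positivity)] at hnn; linarith
    have hnu1 : (1:ℝ) ≤ (n:ℝ) * u ^ 2 := by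
      rw [hlog4] at hL4; nlinarith
    have hlp : logPlus ((S:ℝ) / (K * n)) ≤ L := by
      rw [logPlus]
      split_ifs with h
      · refine Real.log_le_log (by positivity) ?_
        rw [div_le_div_iff₀ (by positivity) hK0']
        nlinarith [mul_le_mul_of_nonneg_left hnu1 (mul_pos hS0' hK0').le]
      · exact hL0.le
    have hdiv : logPlus ((S:ℝ) / (K * n)) / n ≤ u ^ 2 / 3 := by
      rw [div_le_div_iff₀ hn0' (by norm_num)]
      calc logPlus ((S:ℝ) / (K * n)) * 3 ≤ L * 3 := by linarith
        _ ≤ u ^ 2 * n := by nlinarith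
    calc Real.sqrt (logPlus ((S:ℝ) / (K * n)) / n) ≤ Real.sqrt (u ^ 2 / 3) :=
          Real.sqrt_le_sqrt hdiv
      _ = u / Real.sqrt 3 := by
          rw [show u ^ 2 / 3 = (u / Real.sqrt 3) ^ 2 by
            rw [div_pow, Real.sq_sqrt (by norm_num : (0:ℝ) ≤ 3)]]
          exact Real.sqrt_sq (by positivity)
      _ = (1 - c) * u := by rw [hc]; ring
  have hsub : ∀ n : ℕ, n₀ < n → 1 ≤ n →
      {ω | u ≤ μ - (∑ j ∈ Finset.Icc 1 n, D j ω) / n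
          + Real.sqrt (logPlus ((S:ℝ) / (K * n)) / n)}
        ⊆ {ω | c * u ≤ μ - (∑ j ∈ Finset.Icc 1 n, D j ω) / n} := by
    intro n hn hn1 ω hω
    simp only [Set.mem_setOf_eq] at hω ⊢
    have := hgam n hn hn1
    nlinarith
  -- split the sum
  rw [← Finset.sum_filter_add_sum_filter_not (Finset.Icc 1 S) (· ≤ n₀)]
  have hfirst : ∑ n ∈ (Finset.Icc 1 S).filter (· ≤ n₀),
      (P {ω | u ≤ μ - (∑ j ∈ Finset.Icc 1 n, D j ω) / n
          + Real.sqrt (logPlus ((S:ℝ) / (K * n)) / n)}).toReal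
      ≤ 3 * L / u ^ 2 := by
    calc ∑ n ∈ (Finset.Icc 1 S).filter (· ≤ n₀),
        (P {ω | u ≤ μ - (∑ j ∈ Finset.Icc 1 n, D j ω) / n
            + Real.sqrt (logPlus ((S:ℝ) / (K * n)) / n)}).toReal
        ≤ ∑ n ∈ (Finset.Icc 1 S).filter (· ≤ n₀), 1 := by
          refine Finset.sum_le_sum fun n _ => ?_
          simpa using ENNReal.toReal_mono ENNReal.one_ne_top prob_le_one
      _ = ((Finset.Icc 1 S).filter (· ≤ n₀)).card := by simp
      _ ≤ (n₀ : ℝ) := by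
          have hsub2 : (Finset.Icc 1 S).filter (· ≤ n₀) ⊆ Finset.Icc 1 n₀ := by
            intro x hx
            simp only [Finset.mem_filter, Finset.mem_Icc, decide_eq_true_eq] at *
            omega
          have := Finset.card_le_card hsub2
          rw [Nat.card_Icc] at this
          exact_mod_cast le_trans (Nat.cast_le.2 this) (by simp)
      _ ≤ 3 * L / u ^ 2 := hn₀le
  have hIcc : (Finset.Icc 1 S).filter (fun n => ¬ n ≤ n₀) = Finset.Icc (n₀ + 1) S := by
    ext x
    simp only [Finset.mem_filter, Finset.mem_Icc, decide_eq_true_eq]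
    omega
  rw [hIcc]
  by_cases hcase : u ≤ 1 / c
  · -- geometric part
    set r : ℝ := Real.exp (-(2 * c ^ 2 * u ^ 2)) with hrdef
    have hr0 : 0 ≤ r := (Real.exp_pos _).le
    have hr1 : r < 1 := by
      rw [hrdef, Real.exp_lt_one_iff]
      have : 0 < 2 * c ^ 2 * u ^ 2 := by positivity
      linarith
    have hsecond : ∑ n ∈ Finset.Icc (n₀ + 1) S,
        (P {ω | u ≤ μ - (∑ j ∈ Finset.Icc 1 n, D j ω) / n
            + Real.sqrt (logPlus ((S:ℝ) / (K * n)) / n)}).toReal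
        ≤ Real.exp (-12 * c ^ 2 * Real.log 2) / (1 - Real.exp (-2 * c ^ 2 * u ^ 2)) := by
      have hterm : ∀ n ∈ Finset.Icc (n₀ + 1) S,
          (P {ω | u ≤ μ - (∑ j ∈ Finset.Icc 1 n, D j ω) / n
              + Real.sqrt (logPlus ((S:ℝ) / (K * n)) / n)}).toReal ≤ r ^ n := by
        intro n hn
        rw [Finset.mem_Icc] at hn
        have hn1 : 1 ≤ n := by omega
        have hP : (P {ω | u ≤ μ - (∑ j ∈ Finset.Icc 1 n, D j ω) / n
              + Real.sqrt (logPlus ((S:ℝ) / (K * n)) / n)}).toReal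
            ≤ (P {ω | c * u ≤ μ - (∑ j ∈ Finset.Icc 1 n, D j ω) / n}).toReal :=
          ENNReal.toReal_mono (measure_ne_top _ _)
            (measure_mono (hsub n (by omega) hn1))
        refine hP.trans ?_
        have := hoeffding_sum P S D hDmeas hindep hident hbdd μ hmean n hn1 hn.2
          (c * u) (by positivity)
        refine this.trans (le_of_eq ?_)
        rw [← Real.exp_nat_mul]
        congr 1
        ring
      calc ∑ n ∈ Finset.Icc (n₀ + 1) S,
          (P {ω | u ≤ μ - (∑ j ∈ Finset.Icc 1 n, D j ω) / n
              + Real.sqrt (logPlus ((S:ℝ) / (K * n)) / n)}).toReal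
          ≤ ∑ n ∈ Finset.Icc (n₀ + 1) S, r ^ n := Finset.sum_le_sum hterm
        _ ≤ r ^ (n₀ + 1) / (1 - r) := geom_tail hr0 hr1 _ _
        _ ≤ Real.exp (-12 * c ^ 2 * Real.log 2) / (1 - Real.exp (-2 * c ^ 2 * u ^ 2)) := by
            have hden : Real.exp (-2 * c ^ 2 * u ^ 2) = r := by rw [hrdef]; ring_nf
            rw [hden]
            gcongr
            · rw [hrdef, ← Real.exp_nat_mul, Real.exp_le_exp]
              have h3L : 3 * L < u ^ 2 * ((n₀ : ℝ) + 1) := by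
                rw [div_lt_iff₀ (by positivity)] at hn₀lt; linarith
              have h6 : 6 * Real.log 2 ≤ u ^ 2 * ((n₀ : ℝ) + 1) := by
                rw [hlog4] at hL4; linarith
              have := mul_le_mul_of_nonneg_left h6 (by positivity : (0:ℝ) ≤ 2 * c ^ 2)
              push_cast
              nlinarith
    rw [if_pos hcase]
    exact add_le_add hfirst hsecond
  · rw [if_neg hcase]
    have hcu : 1 < c * u := by
      rw [not_le, div_lt_iff₀ hc0] at hcase; linarith [mul_comm c u]
    have h1S : 1 ∈ Finset.Icc 1 S := by simp only [Finset.mem_Icc]; omega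
    have hD1int : Integrable (D 1) P :=
      ⟨(hDmeas 1).aestronglyMeasurable, HasFiniteIntegral.of_bounded (C := 1)
        ((hbdd 1 h1S).mono fun ω h => by
          rw [Real.norm_eq_abs]; exact abs_le.2 ⟨by linarith [h.1], h.2⟩)⟩
    have hμ1 : μ ≤ 1 := by
      have := integral_mono_ae hD1int (integrable_const (1:ℝ))
        ((hbdd 1 h1S).mono fun ω h => h.2)
      simpa [hmean] using this
    have hzero : ∀ n ∈ Finset.Icc (n₀ + 1) S,
        (P {ω | u ≤ μ - (∑ j ∈ Finset.Icc 1 n, D j ω) / n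
            + Real.sqrt (logPlus ((S:ℝ) / (K * n)) / n)}).toReal = 0 := by
      intro n hn
      rw [Finset.mem_Icc] at hn
      have hn1 : 1 ≤ n := by omega
      have hn0' : (0:ℝ) < n := by exact_mod_cast hn1
      have hae : ∀ᵐ ω ∂P, ∀ j ∈ Finset.Icc 1 n, D j ω ∈ Set.Icc (0:ℝ) 1 := by
        rw [Filter.eventually_all_finset]
        intro j hj
        refine hbdd j ?_
        simp only [Finset.mem_Icc] at *
        omega
      have hnull : P {ω | c * u ≤ μ - (∑ j ∈ Finset.Icc 1 n, D j ω) / n} = 0 := by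
        refine MeasureTheory.measure_eq_zero_iff_ae_notMem.2 (hae.mono fun ω h => ?_)
        simp only [Set.mem_setOf_eq, not_le]
        have hsumnn : 0 ≤ ∑ j ∈ Finset.Icc 1 n, D j ω :=
          Finset.sum_nonneg fun j hj => (h j hj).1
        have : 0 ≤ (∑ j ∈ Finset.Icc 1 n, D j ω) / n := by positivity
        linarith
      have h0 := measure_mono_null (hsub n (by omega) hn1) hnull
      simp only [h0, ENNReal.toReal_zero]
    rw [Finset.sum_eq_zero hzero]
    have hif : (0:ℝ) ≤ 0 := le_refl 0
    linarith [hfirst]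
end

section
/- Fix positive integers S and K with 4K ≤ S. For each arm k ∈ {1,…,K} let (D_{k,n})_{n=1}^S be random variables taking values in [0,1], i.i.d. with mean μ_k within each arm, the whole family being jointly independent. For each k ∈ {1,…,K} and s ∈ {1,…,S} let N_{k,s} be an arbitrary random variable on the same probability space with values in {0,1,…,S}. Then Σ_{k=1}^K Σ_{s=1}^S E[ (μ_k − U_k(N_{k,s}))⁺ ] ≤ 6√(SK), where x⁺ = max(x,0). -/
open MeasureTheory ProbabilityTheory

/-- The sample mean of the first `n` observations of arm `k`. -/
noncomputable def sampleMean {Ω : Type*} (D : ℕ → ℕ → Ω → ℝ) (k n : ℕ) (ω : Ω) : ℝ :=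
  (∑ j ∈ Finset.Icc 1 n, D k j ω) / n

/-- The upper confidence bound `U_k(n) = min(1, X̄_k(n) + β_n)` with `U_k(0) = 1`,
where `β_n = √(log₊(SK/n)/n)`. -/
noncomputable def ucbU {Ω : Type*} (S K : ℕ) (D : ℕ → ℕ → Ω → ℝ) (k n : ℕ) (ω : Ω) : ℝ :=
  if n = 0 then 1
  else min 1 (sampleMean D k n ω + Real.sqrt (logPlus ((S : ℝ) * K / n) / n))


open scoped ENNReal

set_option maxHeartbeats 1000000

section AuxLemmas

lemma logPlus_nonneg (x : ℝ) : 0 ≤ logPlus x := by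
  unfold logPlus; split
  · exact Real.log_nonneg ‹_›
  · exact le_rfl

lemma logPlus_mono {x y : ℝ} (hx : 0 < x) (hxy : x ≤ y) : logPlus x ≤ logPlus y := by
  unfold logPlus
  split <;> split
  · exact Real.log_le_log (by linarith) hxy
  · linarith
  · exact Real.log_nonneg ‹_›
  · exact le_rfl

lemma exp_neg_logPlus_le {x : ℝ} (hx : 0 < x) : Real.exp (-logPlus x) ≤ 1 / x := by
  unfold logPlus
  split
  · rw [Real.exp_neg, Real.exp_log (by linarith), one_div]
  · rw [neg_zero, Real.exp_zero, le_div_iff₀ hx]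
    linarith

lemma exp_neg_le_inv_sq {u : ℝ} (hu : 0 < u) : Real.exp (-u) ≤ 1 / u^2 := by
  have h1 : u / 2 ≤ Real.exp (u/2 - 1) := by
    have := Real.add_one_le_exp (u/2 - 1); linarith
  have h2 : u ≤ Real.exp (u/2) := by
    calc u = 2 * (u/2) := by ring
    _ ≤ Real.exp 1 * Real.exp (u/2 - 1) := by
          have he : (2:ℝ) ≤ Real.exp 1 := by
            have := Real.exp_one_gt_d9; linarith
          have h3 : (0:ℝ) ≤ u / 2 := by linarith
          nlinarith [Real.exp_pos (u/2-1)]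
    _ = Real.exp (u/2) := by rw [← Real.exp_add]; ring_nf
  have h4 : u^2 ≤ Real.exp u := by
    have := mul_le_mul h2 h2 (le_of_lt hu) (le_of_lt (Real.exp_pos _))
    rw [← Real.exp_add] at this
    calc u^2 = u * u := sq u
    _ ≤ Real.exp (u/2 + u/2) := this
    _ = Real.exp u := by ring_nf
  rw [Real.exp_neg, ← one_div]
  exact one_div_le_one_div_of_le (by positivity) h4

-- geometric sum bound : ∑_{j<M} 2^j exp(-2^j b) ≤ 4 / b
lemma sum_two_pow_exp_le (M : ℕ) {b : ℝ} (hb : 0 < b) :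
    ∑ j ∈ Finset.range M, (2:ℝ)^j * Real.exp (-((2:ℝ)^j * b)) ≤ 4 / b := by
  classical
  set s₁ := (Finset.range M).filter (fun j => (2:ℝ)^j ≤ 1/b) with hs₁
  set s₂ := (Finset.range M).filter (fun j => ¬ ((2:ℝ)^j ≤ 1/b)) with hs₂
  have hsplit := Finset.sum_filter_add_sum_filter_not (Finset.range M)
    (fun j => (2:ℝ)^j ≤ 1/b) (fun j => (2:ℝ)^j * Real.exp (-((2:ℝ)^j * b)))
  have hA : ∑ j ∈ s₁, (2:ℝ)^j * Real.exp (-((2:ℝ)^j * b)) ≤ 2 / b := by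
    have h1 : ∑ j ∈ s₁, (2:ℝ)^j * Real.exp (-((2:ℝ)^j * b)) ≤ ∑ j ∈ s₁, (2:ℝ)^j := by
      apply Finset.sum_le_sum
      intro j _
      have : Real.exp (-((2:ℝ)^j * b)) ≤ 1 := by
        rw [Real.exp_le_one_iff]
        have : (0:ℝ) ≤ (2:ℝ)^j * b := by positivity
        linarith
      nlinarith [pow_pos (by norm_num : (0:ℝ) < 2) j]
    rcases Finset.eq_empty_or_nonempty s₁ with he | hne
    · rw [he] at h1; simp at h1
      calc ∑ j ∈ s₁, (2:ℝ)^j * Real.exp (-((2:ℝ)^j * b)) ≤ 0 := by rw [he]; simp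
      _ ≤ 2 / b := by positivity
    · set jm := s₁.max' hne with hjm
      have hmem : jm ∈ s₁ := s₁.max'_mem hne
      have hjmle : (2:ℝ)^jm ≤ 1/b := (Finset.mem_filter.1 hmem).2
      have hsub : s₁ ⊆ Finset.range (jm + 1) := by
        intro j hj
        exact Finset.mem_range.2 (Nat.lt_succ_of_le (s₁.le_max' j hj))
      have h2 : ∑ j ∈ s₁, (2:ℝ)^j ≤ ∑ j ∈ Finset.range (jm+1), (2:ℝ)^j :=
        Finset.sum_le_sum_of_subset_of_nonneg hsub (by intro j _ _; positivity)
      have h3 : ∑ j ∈ Finset.range (jm+1), (2:ℝ)^j = 2^(jm+1) - 1 := by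
        rw [geom_sum_eq (by norm_num : (2:ℝ) ≠ 1)]
        norm_num
      have : (2:ℝ)^(jm+1) - 1 ≤ 2 / b := by
        rw [pow_succ]
        rw [div_eq_mul_inv, ← one_div]
        nlinarith
      linarith
  have hB : ∑ j ∈ s₂, (2:ℝ)^j * Real.exp (-((2:ℝ)^j * b)) ≤ 2 / b := by
    have h1 : ∀ j ∈ s₂, (2:ℝ)^j * Real.exp (-((2:ℝ)^j * b)) ≤ (1/2)^j / b^2 := by
      intro j hj
      have hpow : (0:ℝ) < (2:ℝ)^j := by positivity
      have hu : (0:ℝ) < (2:ℝ)^j * b := by positivity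
      have := exp_neg_le_inv_sq hu
      calc (2:ℝ)^j * Real.exp (-((2:ℝ)^j * b)) ≤ (2:ℝ)^j * (1 / ((2:ℝ)^j * b)^2) := by
            nlinarith
      _ = (1/2)^j / b^2 := by
            field_simp
            rw [← mul_pow]; norm_num
    rcases Finset.eq_empty_or_nonempty s₂ with he | hne
    · rw [he]; simp; positivity
    · set jm := s₂.min' hne with hjm
      have hmem : jm ∈ s₂ := s₂.min'_mem hne
      have hjmgt : 1/b < (2:ℝ)^jm := not_le.1 (Finset.mem_filter.1 hmem).2
      have hhalf : ((1:ℝ)/2)^jm < b := by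
        have hp : (0:ℝ) < (2:ℝ)^jm := by positivity
        rw [one_div, inv_pow, inv_lt_comm₀ hp hb, ← one_div]
        exact hjmgt
      have h2 : ∑ j ∈ s₂, (2:ℝ)^j * Real.exp (-((2:ℝ)^j * b)) ≤ ∑ j ∈ s₂, (1/2)^j / b^2 :=
        Finset.sum_le_sum h1
      have h3 : ∑ j ∈ s₂, ((1:ℝ)/2)^j ≤ ∑ j ∈ Finset.Ico jm M, ((1:ℝ)/2)^j := by
        apply Finset.sum_le_sum_of_subset_of_nonneg
        · intro j hj
          rw [Finset.mem_Ico]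
          exact ⟨s₂.min'_le j hj, Finset.mem_range.1 (Finset.mem_filter.1 hj).1⟩
        · intro j _ _; positivity
      have h4 : ∑ j ∈ Finset.Ico jm M, ((1:ℝ)/2)^j ≤ (1/2)^jm * 2 := by
        rcases le_or_gt jm M with hle | hlt
        · rw [Finset.sum_Ico_eq_sum_range]
          have : ∀ i, ((1:ℝ)/2)^(jm + i) = (1/2)^jm * (1/2)^i := fun i => pow_add _ _ _
          rw [Finset.sum_congr rfl (fun i _ => this i), ← Finset.mul_sum]
          have := sum_geometric_two_le (M - jm)
          nlinarith [pow_pos (by norm_num : (0:ℝ) < 1/2) jm]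
        · rw [Finset.Ico_eq_empty (by omega), Finset.sum_empty]
          positivity
      have hfinal : ∑ j ∈ s₂, ((1:ℝ)/2)^j ≤ 2 * b := by
        calc ∑ j ∈ s₂, ((1:ℝ)/2)^j ≤ (1/2)^jm * 2 := le_trans h3 h4
        _ ≤ 2 * b := by nlinarith
      calc ∑ j ∈ s₂, (2:ℝ)^j * Real.exp (-((2:ℝ)^j * b)) ≤ ∑ j ∈ s₂, ((1:ℝ)/2)^j / b^2 := h2
      _ = (∑ j ∈ s₂, ((1:ℝ)/2)^j) / b^2 := by rw [Finset.sum_div]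
      _ ≤ (2*b) / b^2 := by gcongr
      _ = 2 / b := by field_simp
  calc ∑ j ∈ Finset.range M, (2:ℝ)^j * Real.exp (-((2:ℝ)^j * b))
      = ∑ j ∈ s₁, (2:ℝ)^j * Real.exp (-((2:ℝ)^j * b)) + ∑ j ∈ s₂, (2:ℝ)^j * Real.exp (-((2:ℝ)^j * b)) := hsplit.symm
  _ ≤ 2/b + 2/b := add_le_add hA hB
  _ = 4 / b := by ring

lemma hoeffding_convex_aux (p : ℝ) (hp0 : 0 ≤ p) (hp1 : p ≤ 1) (u : ℝ) :
    (1 - p) * Real.exp (-p * u) + p * Real.exp ((1 - p) * u) ≤ Real.exp (u ^ 2 / 8) := by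
  have hpos : ∀ x : ℝ, 0 < 1 - p + p * Real.exp x := by
    intro x
    rcases le_total (Real.exp x) 1 with h | h
    · nlinarith [Real.exp_pos x]
    · nlinarith
  set h : ℝ → ℝ := fun x => 1 - p + p * Real.exp x with hh_def
  set q : ℝ → ℝ := fun x => p * Real.exp x / h x with hq_def
  have hq0 : q 0 = p := by simp [hq_def, hh_def]
  have hq_nonneg : ∀ x, 0 ≤ q x := fun x =>
    div_nonneg (by positivity) (le_of_lt (hpos x))
  have hq_le_one : ∀ x, q x ≤ 1 := fun x =>
    (div_le_one (hpos x)).2 (by nlinarith [Real.exp_pos x])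
  have hderivh : ∀ x, HasDerivAt h (p * Real.exp x) x := by
    intro x
    have := ((Real.hasDerivAt_exp x).const_mul p).const_add (1 - p)
    simpa [hh_def] using this
  have hderivq : ∀ x, HasDerivAt q (q x * (1 - q x)) x := by
    intro x
    have h1 : HasDerivAt (fun x => p * Real.exp x) (p * Real.exp x) x :=
      (Real.hasDerivAt_exp x).const_mul p
    have h2 := h1.div (hderivh x) (ne_of_gt (hpos x))
    refine h2.congr_deriv ?_
    have hne : h x ≠ 0 := ne_of_gt (hpos x)
    show _ = p * Real.exp x / h x * (1 - p * Real.exp x / h x)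
    field_simp
  -- q is 1/4-Lipschitz
  have hlip : ∀ x y : ℝ, |q x - q y| ≤ |x - y| / 4 := by
    intro x y
    have key := Convex.norm_image_sub_le_of_norm_hasDerivWithin_le
      (f := q) (f' := fun z => q z * (1 - q z)) (C := 1/4) (s := Set.univ)
      (fun z _ => (hderivq z).hasDerivWithinAt)
      (fun z _ => by
        show ‖q z * (1 - q z)‖ ≤ 1/4
        rw [Real.norm_eq_abs, abs_le]
        constructor <;> nlinarith [hq_nonneg z, hq_le_one z, sq_nonneg (1/2 - q z)])
      convex_univ (Set.mem_univ y) (Set.mem_univ x)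
    rw [Real.norm_eq_abs, Real.norm_eq_abs] at key
    linarith
  set φ : ℝ → ℝ := fun x => x^2/8 + p*x - Real.log (h x) with hφ_def
  have hderivφ : ∀ x, HasDerivAt φ (x/4 + p - q x) x := by
    intro x
    have h1 : HasDerivAt (fun x : ℝ => x^2/8) (x/4) x := by
      have := (hasDerivAt_pow 2 x).div_const 8
      refine this.congr_deriv ?_
      push_cast
      ring
    have h2 : HasDerivAt (fun x : ℝ => p * x) p x := by
      simpa using (hasDerivAt_id x).const_mul p
    have h3 : HasDerivAt (fun x => Real.log (h x)) (p * Real.exp x / h x) x :=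
      (hderivh x).log (ne_of_gt (hpos x))
    exact (h1.add h2).sub h3
  have hφ0 : φ 0 = 0 := by simp [hφ_def, hh_def]
  have hφdiff : Differentiable ℝ φ := fun x => (hderivφ x).differentiableAt
  have hφnonneg : ∀ x, 0 ≤ φ x := by
    intro x
    rcases le_total 0 x with hx | hx
    · have hmono : MonotoneOn φ (Set.Ici 0) := by
        apply monotoneOn_of_deriv_nonneg (convex_Ici 0) hφdiff.continuous.continuousOn
          hφdiff.differentiableOn
        intro z hz
        rw [interior_Ici] at hz
        rw [(hderivφ z).deriv]
        have := hlip z 0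
        rw [hq0, sub_zero] at this
        have hzpos : 0 < z := hz
        have habs : |q z - p| ≤ z / 4 := by
          rw [abs_of_pos hzpos] at this; linarith
        have := abs_le.1 habs
        linarith [this.2]
      have := hmono (Set.mem_Ici.2 le_rfl) (Set.mem_Ici.2 hx) hx
      linarith [hφ0]
    · have hmono : AntitoneOn φ (Set.Iic 0) := by
        apply antitoneOn_of_deriv_nonpos (convex_Iic 0) hφdiff.continuous.continuousOn
          hφdiff.differentiableOn
        intro z hz
        rw [interior_Iic] at hz
        rw [(hderivφ z).deriv]
        have := hlip z 0
        rw [hq0, sub_zero] at this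
        have hzneg : z < 0 := hz
        have habs : |q z - p| ≤ -z / 4 := by
          rw [abs_of_neg hzneg] at this; linarith
        have := abs_le.1 habs
        linarith [this.1]
      have := hmono (Set.mem_Iic.2 hx) (Set.mem_Iic.2 le_rfl) hx
      linarith [hφ0]
  -- conclude
  have hkey : h u ≤ Real.exp (u^2/8 + p*u) := by
    have h1 : Real.log (h u) ≤ u^2/8 + p*u := by have := hφnonneg u; simp [hφ_def] at this ⊢; linarith
    calc h u = Real.exp (Real.log (h u)) := (Real.exp_log (hpos u)).symm
    _ ≤ Real.exp (u^2/8 + p*u) := Real.exp_le_exp.2 h1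
  have hLHS : (1 - p) * Real.exp (-p * u) + p * Real.exp ((1 - p) * u)
      = Real.exp (-p*u) * h u := by
    have : Real.exp ((1-p)*u) = Real.exp (-p*u) * Real.exp u := by
      rw [← Real.exp_add]; ring_nf
    simp only [hh_def]
    rw [this]; ring
  rw [hLHS]
  calc Real.exp (-p*u) * h u ≤ Real.exp (-p*u) * Real.exp (u^2/8 + p*u) := by
        have := Real.exp_pos (-p*u); nlinarith
  _ = Real.exp (u^2/8) := by rw [← Real.exp_add]; ring_nf

section Omega

variable {Ω : Type*}

lemma indep_of_le {mΩ : MeasurableSpace Ω} {P : Measure Ω} {m₁ m₂ m₁' m₂' : MeasurableSpace Ω}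
    (h : @Indep Ω m₁ m₂ mΩ P) (h1 : m₁' ≤ m₁) (h2 : m₂' ≤ m₂) : @Indep Ω m₁' m₂' mΩ P := by
  rw [Indep_iff] at h ⊢
  exact fun t1 t2 ht1 ht2 => h t1 t2 (h1 _ ht1) (h2 _ ht2)


variable [MeasurableSpace Ω] {P : Measure Ω} [IsProbabilityMeasure P]

lemma mgf_centered_le {X : Ω → ℝ} (hX : Measurable X) (hb : ∀ᵐ ω ∂P, X ω ∈ Set.Icc (0:ℝ) 1)
    (t : ℝ) :
    ∫ ω, Real.exp (t * ((∫ x, X x ∂P) - X ω)) ∂P ≤ Real.exp (t^2/8) := by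
  have hXint : Integrable X P := by
    apply Integrable.mono' (integrable_const (1:ℝ)) hX.aestronglyMeasurable
    filter_upwards [hb] with ω hω
    rw [Real.norm_eq_abs, abs_le]
    exact ⟨by linarith [hω.1], hω.2⟩
  set p := ∫ x, X x ∂P with hp_def
  have hp0 : 0 ≤ p := by
    rw [hp_def]
    apply integral_nonneg_of_ae
    filter_upwards [hb] with ω hω using hω.1
  have hp1 : p ≤ 1 := by
    rw [hp_def]
    calc ∫ x, X x ∂P ≤ ∫ _, (1:ℝ) ∂P := by
          apply integral_mono_ae hXint (integrable_const 1)
          filter_upwards [hb] with ω hω using hω.2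
    _ = 1 := by simp
  have hptw : ∀ᵐ ω ∂P, Real.exp (t * (p - X ω)) ≤
      X ω * Real.exp (t * (p - 1)) + (1 - X ω) * Real.exp (t * p) := by
    filter_upwards [hb] with ω hω
    have key := convexOn_exp.2 (Set.mem_univ (t * (p-1))) (Set.mem_univ (t * p))
      (show (0:ℝ) ≤ X ω from hω.1) (show (0:ℝ) ≤ 1 - X ω by linarith [hω.2])
      (show X ω + (1 - X ω) = 1 by ring)
    simp only [smul_eq_mul] at key
    have harg : X ω * (t * (p-1)) + (1 - X ω) * (t * p) = t * (p - X ω) := by ring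
    rw [harg] at key
    exact key
  have hint1 : Integrable (fun ω => Real.exp (t * (p - X ω))) P := by
    apply Integrable.mono' (integrable_const (Real.exp |t|))
      ((hX.const_sub p).const_mul t).exp.aestronglyMeasurable
    filter_upwards [hb] with ω hω
    rw [Real.norm_eq_abs, abs_of_pos (Real.exp_pos _), Real.exp_le_exp]
    have h1 : |p - X ω| ≤ 1 := by rw [abs_le]; constructor <;> [linarith [hω.2]; linarith [hω.1]]
    calc t * (p - X ω) ≤ |t * (p - X ω)| := le_abs_self _
    _ = |t| * |p - X ω| := abs_mul _ _
    _ ≤ |t| * 1 := mul_le_mul_of_nonneg_left h1 (abs_nonneg t)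
    _ = |t| := mul_one _
  have hint2 : Integrable (fun ω => X ω * Real.exp (t * (p - 1)) + (1 - X ω) * Real.exp (t * p)) P :=
    (hXint.mul_const _).add (((integrable_const (1:ℝ)).sub hXint).mul_const _)
  have hstep : ∫ ω, Real.exp (t * (p - X ω)) ∂P ≤
      p * Real.exp (t * (p - 1)) + (1 - p) * Real.exp (t * p) := by
    calc ∫ ω, Real.exp (t * (p - X ω)) ∂P
        ≤ ∫ ω, (X ω * Real.exp (t * (p - 1)) + (1 - X ω) * Real.exp (t * p)) ∂P :=
          integral_mono_ae hint1 hint2 hptw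
    _ = ∫ ω, (X ω * (Real.exp (t*(p-1)) - Real.exp (t*p)) + Real.exp (t*p)) ∂P :=
          integral_congr_ae (Filter.Eventually.of_forall (fun ω => by ring))
    _ = p * (Real.exp (t*(p-1)) - Real.exp (t*p)) + Real.exp (t*p) := by
          rw [integral_add (hXint.mul_const _) (integrable_const _), integral_mul_const,
            integral_const]
          simp [hp_def]
    _ = p * Real.exp (t * (p - 1)) + (1 - p) * Real.exp (t * p) := by ring
  have haux := hoeffding_convex_aux p hp0 hp1 (-t)
  have h1 : Real.exp (-p * -t) = Real.exp (t * p) := by ring_nf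
  have h2 : Real.exp ((1 - p) * -t) = Real.exp (t * (p - 1)) := by ring_nf
  have h3 : ((-t:ℝ)) ^ 2 / 8 = t^2/8 := by ring
  rw [h1, h2, h3] at haux
  calc ∫ ω, Real.exp (t * (p - X ω)) ∂P
      ≤ p * Real.exp (t * (p - 1)) + (1 - p) * Real.exp (t * p) := hstep
  _ ≤ Real.exp (t^2/8) := by linarith

lemma iIndepFun_precomp_inj {ι κ : Type*} [Nonempty κ] {f : ι → Ω → ℝ}
    (g : κ → ι) (hg : Function.Injective g)
    (h : iIndepFun f P) :
    iIndepFun (fun j => f (g j)) P := by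
  classical
  rw [iIndepFun_iff_measure_inter_preimage_eq_mul] at h ⊢
  intro Sf sets hmeas
  have hinv : ∀ j : κ, Function.invFun g (g j) = j := fun j => Function.leftInverse_invFun hg j
  set sets' : ι → Set ℝ := fun i =>
    if i ∈ Sf.image g then sets (Function.invFun g i) else Set.univ with hsets'
  have hmeas' : ∀ i ∈ Sf.image g, MeasurableSet (sets' i) := by
    intro i hi
    rw [hsets']
    simp only [hi, if_true]
    obtain ⟨j, hj, rfl⟩ := Finset.mem_image.1 hi
    rw [hinv j]
    exact hmeas j hj
  have key := h (Sf.image g) hmeas'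
  have hsets'g : ∀ j ∈ Sf, sets' (g j) = sets j := by
    intro j hj
    rw [hsets']
    simp only [Finset.mem_image]
    rw [if_pos ⟨j, hj, rfl⟩, hinv j]
  have hL : (⋂ i ∈ Sf.image g, f i ⁻¹' sets' i) = ⋂ j ∈ Sf, (fun ω => f (g j) ω) ⁻¹' sets j := by
    ext ω
    simp only [Set.mem_iInter, Finset.mem_image]
    constructor
    · intro H j hj
      have := H (g j) ⟨j, hj, rfl⟩
      rwa [hsets'g j hj] at this
    · rintro H i ⟨j, hj, rfl⟩
      rw [hsets'g j hj]
      exact H j hj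
  have hR : ∏ i ∈ Sf.image g, P (f i ⁻¹' sets' i) = ∏ j ∈ Sf, P ((fun ω => f (g j) ω) ⁻¹' sets j) := by
    rw [Finset.prod_image (fun a _ b _ hab => hg hab)]
    apply Finset.prod_congr rfl
    intro j hj
    rw [hsets'g j hj]
  rw [hL, hR] at key
  exact key

lemma maximal_ineq {S : ℕ} (V : Fin S → Ω → ℝ) (hmeas : ∀ i, Measurable (V i))
    (hind : iIndepFun V P)
    (μk : ℝ) (hμ : ∀ i, ∫ ω, V i ω ∂P = μk) (hb : ∀ i, ∀ᵐ ω ∂P, V i ω ∈ Set.Icc (0:ℝ) 1)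
    (m : ℕ) (hm1 : 1 ≤ m) (hmS : m ≤ S) {a : ℝ} (ha : 0 < a) :
    (P {ω | ∃ n, 1 ≤ n ∧ n ≤ m ∧
        a ≤ ∑ i ∈ Finset.univ.filter (fun i : Fin S => (i:ℕ) < n), (μk - V i ω)}).toReal
      ≤ Real.exp (-2*a^2/m) := by
  classical
  have hSpos : 0 < S := lt_of_lt_of_le hm1 hmS
  set Y : Fin S → Ω → ℝ := fun i ω => μk - V i ω with hY_def
  set Z : ℕ → Ω → ℝ := fun n ω => ∑ i ∈ Finset.univ.filter (fun i : Fin S => (i:ℕ) < n), Y i ω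
    with hZ_def
  have hYmeas : ∀ i, Measurable (Y i) := fun i => measurable_const.sub (hmeas i)
  have hZmeas : ∀ n, Measurable (Z n) := fun n =>
    Finset.measurable_sum _ (fun i _ => hYmeas i)
  -- μk ∈ [0,1]
  have i0 : Fin S := ⟨0, hSpos⟩
  have hVint : ∀ i, Integrable (V i) P := by
    intro i
    apply Integrable.mono' (integrable_const (1:ℝ)) (hmeas i).aestronglyMeasurable
    filter_upwards [hb i] with ω hω
    rw [Real.norm_eq_abs, abs_le]; exact ⟨by linarith [hω.1], hω.2⟩
  have hμk0 : 0 ≤ μk := by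
    rw [← hμ i0]
    apply integral_nonneg_of_ae
    filter_upwards [hb i0] with ω hω using hω.1
  have hμk1 : μk ≤ 1 := by
    rw [← hμ i0]
    calc ∫ ω, V i0 ω ∂P ≤ ∫ _, (1:ℝ) ∂P := by
          apply integral_mono_ae (hVint i0) (integrable_const 1)
          filter_upwards [hb i0] with ω hω using hω.2
    _ = 1 := by simp
  have hgood : ∀ᵐ ω ∂P, ∀ i, V i ω ∈ Set.Icc (0:ℝ) 1 := ae_all_iff.2 hb
  have hZbd : ∀ n, ∀ᵐ ω ∂P, |Z n ω| ≤ S := by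
    intro n
    filter_upwards [hgood] with ω hω
    calc |Z n ω| ≤ ∑ i ∈ Finset.univ.filter (fun i : Fin S => (i:ℕ) < n), |Y i ω| :=
          Finset.abs_sum_le_sum_abs _ _
    _ ≤ ∑ _i ∈ Finset.univ.filter (fun i : Fin S => (i:ℕ) < n), (1:ℝ) := by
          apply Finset.sum_le_sum
          intro i _
          have := hω i
          show |μk - V i ω| ≤ 1
          rw [abs_le]
          constructor <;> [linarith [this.2]; linarith [this.1]]
    _ = (Finset.univ.filter (fun i : Fin S => (i:ℕ) < n)).card := by simp
    _ ≤ S := by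
          have := Finset.card_filter_le (Finset.univ : Finset (Fin S))
            (fun i : Fin S => (i:ℕ) < n)
          simp at this
          exact_mod_cast this
  have hint_exp : ∀ (W : Ω → ℝ), Measurable W → (∀ᵐ ω ∂P, |W ω| ≤ S) → ∀ c : ℝ,
      Integrable (fun ω => Real.exp (c * W ω)) P := by
    intro W hW hWbd c
    apply Integrable.mono' (integrable_const (Real.exp (|c| * S)))
      (hW.const_mul c).exp.aestronglyMeasurable
    filter_upwards [hWbd] with ω hω
    rw [Real.norm_eq_abs, abs_of_pos (Real.exp_pos _), Real.exp_le_exp]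
    calc c * W ω ≤ |c * W ω| := le_abs_self _
    _ = |c| * |W ω| := abs_mul _ _
    _ ≤ |c| * S := mul_le_mul_of_nonneg_left hω (abs_nonneg c)
  set lam : ℝ := 4 * a / m with hlam_def
  have hmpos : (0:ℝ) < m := by exact_mod_cast hm1
  have hlam : 0 < lam := by positivity
  set A : ℕ → Set Ω := fun n => {ω | a ≤ Z n ω} ∩ ⋂ j, ⋂ (_ : j < n), {ω | Z j ω < a}
    with hA_def
  have hmemA : ∀ n ω, ω ∈ A n ↔ (a ≤ Z n ω ∧ ∀ j < n, Z j ω < a) := by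
    intro n ω
    simp [hA_def, Set.mem_iInter]
  have hAmeas : ∀ n, MeasurableSet (A n) :=
    fun n => (measurableSet_le measurable_const (hZmeas n)).inter
      (MeasurableSet.iInter fun j => MeasurableSet.iInter fun _ =>
        measurableSet_lt (hZmeas j) measurable_const)
  have hdisj : (↑(Finset.Icc 1 m) : Set ℕ).PairwiseDisjoint A := by
    intro n _ n' _ hne
    rcases lt_or_gt_of_ne hne with hlt | hlt
    · apply Set.disjoint_left.2
      intro ω h1 h2
      exact absurd ((hmemA n ω).1 h1).1 (not_le.2 (((hmemA n' ω).1 h2).2 n hlt))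
    · apply Set.disjoint_left.2
      intro ω h1 h2
      exact absurd ((hmemA n' ω).1 h2).1 (not_le.2 (((hmemA n ω).1 h1).2 n' hlt))
  have hZ0 : ∀ ω, Z 0 ω = 0 := by
    intro ω
    rw [hZ_def]
    simp
  have hcover : {ω | ∃ n, 1 ≤ n ∧ n ≤ m ∧ a ≤ Z n ω} ⊆ ⋃ n ∈ Finset.Icc 1 m, A n := by
    rintro ω ⟨n, hn1, hnm, hZn⟩
    have hex : ∃ k, a ≤ Z k ω := ⟨n, hZn⟩
    set n₀ := Nat.find hex with hn₀
    have hspec : a ≤ Z n₀ ω := Nat.find_spec hex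
    have hmin : ∀ j < n₀, Z j ω < a := fun j hj => lt_of_not_ge (Nat.find_min hex hj)
    have hn₀n : n₀ ≤ n := Nat.find_min' hex hZn
    have hn₀1 : 1 ≤ n₀ := by
      rcases Nat.eq_zero_or_pos n₀ with h0 | h1
      · rw [h0] at hspec
        rw [hZ0 ω] at hspec
        linarith
      · exact h1
    exact Set.mem_biUnion (Finset.mem_Icc.2 ⟨hn₀1, le_trans hn₀n hnm⟩)
      ((hmemA n₀ ω).2 ⟨hspec, hmin⟩)
  -- the exp moment of Z m
  have hZm_eq : Z m = (∑ i ∈ Finset.univ.filter (fun i : Fin S => (i:ℕ) < m), Y i) := by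
    funext ω
    rw [hZ_def]
    simp [Finset.sum_apply]
  have hindY : iIndepFun Y P := by
    have := hind.comp (fun _ => fun x : ℝ => μk - x) (fun _ => measurable_const.sub measurable_id)
    exact this
  have hmgf_le : ∫ ω, Real.exp (lam * Z m ω) ∂P ≤ Real.exp (m * lam^2 / 8) := by
    have h1 : ∫ ω, Real.exp (lam * Z m ω) ∂P
        = mgf (∑ i ∈ Finset.univ.filter (fun i : Fin S => (i:ℕ) < m), Y i) P lam := by
      rw [mgf, hZm_eq]
    rw [h1, hindY.mgf_sum hYmeas]
    have hcard : (Finset.univ.filter (fun i : Fin S => (i:ℕ) < m)).card ≤ m := by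
      calc (Finset.univ.filter (fun i : Fin S => (i:ℕ) < m)).card
          ≤ (Finset.range m).card := by
            apply Finset.card_le_card_of_injOn (fun i : Fin S => (i:ℕ))
            · intro i hi
              rw [Finset.mem_coe, Finset.mem_filter] at hi
              exact Finset.mem_coe.2 (Finset.mem_range.2 hi.2)
            · exact fun i _ j _ h => Fin.val_injective h
      _ = m := Finset.card_range m
    have hper : ∀ i ∈ Finset.univ.filter (fun i : Fin S => (i:ℕ) < m),
        mgf (Y i) P lam ≤ Real.exp (lam^2/8) := by
      intro i _
      have : mgf (Y i) P lam = ∫ ω, Real.exp (lam * ((∫ x, V i x ∂P) - V i ω)) ∂P := by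
        rw [mgf]
        congr 1
        funext ω
        rw [hY_def, hμ i]
      rw [this]
      exact mgf_centered_le (hmeas i) (hb i) lam
    calc ∏ i ∈ Finset.univ.filter (fun i : Fin S => (i:ℕ) < m), mgf (Y i) P lam
        ≤ ∏ _i ∈ Finset.univ.filter (fun i : Fin S => (i:ℕ) < m), Real.exp (lam^2/8) :=
          Finset.prod_le_prod (fun i _ => mgf_nonneg) hper
    _ = Real.exp (lam^2/8) ^ (Finset.univ.filter (fun i : Fin S => (i:ℕ) < m)).card :=
          Finset.prod_const _
    _ ≤ Real.exp (lam^2/8) ^ m := by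
          apply pow_le_pow_right₀ (Real.one_le_exp (by positivity)) hcard
    _ = Real.exp (m * lam^2 / 8) := by
          rw [← Real.exp_nat_mul]
          ring_nf
  -- per-n bound
  have hkey : ∀ n ∈ Finset.Icc 1 m, Real.exp (lam * a) * (P (A n)).toReal
      ≤ ∫ ω in A n, Real.exp (lam * Z m ω) ∂P := by
    intro n hn
    rw [Finset.mem_Icc] at hn
    -- split of index sets
    set s₂ : Finset (Fin S) := Finset.univ.filter (fun i : Fin S => n ≤ (i:ℕ) ∧ (i:ℕ) < m)
      with hs₂
    set W : Ω → ℝ := fun ω => ∑ i ∈ s₂, Y i ω with hW_def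
    have hWmeas : Measurable W := Finset.measurable_sum _ (fun i _ => hYmeas i)
    have hZmW : ∀ ω, Z m ω = Z n ω + W ω := by
      intro ω
      rw [hZ_def, hW_def]
      simp only
      rw [← Finset.sum_union]
      · congr 1
        ext i
        simp only [Finset.mem_union, Finset.mem_filter, Finset.mem_univ, true_and, hs₂]
        omega
      · rw [Finset.disjoint_left]
        intro i hi1 hi2
        simp only [Finset.mem_filter, Finset.mem_univ, true_and, hs₂] at hi1 hi2
        omega
    have hWbd : ∀ᵐ ω ∂P, |W ω| ≤ S := by
      filter_upwards [hgood] with ω hω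
      calc |W ω| ≤ ∑ i ∈ s₂, |Y i ω| := Finset.abs_sum_le_sum_abs _ _
      _ ≤ ∑ _i ∈ s₂, (1:ℝ) := by
            apply Finset.sum_le_sum
            intro i _
            have := hω i
            show |μk - V i ω| ≤ 1
            rw [abs_le]
            constructor <;> [linarith [this.2]; linarith [this.1]]
      _ = s₂.card := by simp
      _ ≤ S := by
            have := Finset.card_filter_le (Finset.univ : Finset (Fin S))
              (fun i : Fin S => n ≤ (i:ℕ) ∧ (i:ℕ) < m)
            simp only [Finset.card_univ, Fintype.card_fin] at this
            exact_mod_cast this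
    -- E[exp(lam W)] ≥ 1
    have hYint : ∀ i : Fin S, Integrable (fun ω => μk - V i ω) P := by
      intro i
      have h := (integrable_const (μ := P) μk).sub (hVint i)
      exact h
    have hWint : Integrable W P := by
      apply integrable_finset_sum
      intro i _
      exact hYint i
    have hWzero : ∫ ω, W ω ∂P = 0 := by
      have : ∫ ω, W ω ∂P = ∑ i ∈ s₂, ∫ ω, (μk - V i ω) ∂P := by
        rw [hW_def]
        exact integral_finset_sum s₂ (fun i _ => hYint i)
      rw [this]
      apply Finset.sum_eq_zero
      intro i _
      rw [integral_sub (integrable_const μk) (hVint i), hμ i]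
      simp
    have hGint : Integrable (fun ω => Real.exp (lam * W ω)) P := hint_exp W hWmeas hWbd lam
    have hGone : (1:ℝ) ≤ ∫ ω, Real.exp (lam * W ω) ∂P := by
      have h1 : ∫ ω, (1 + lam * W ω) ∂P ≤ ∫ ω, Real.exp (lam * W ω) ∂P := by
        apply integral_mono ((integrable_const (1:ℝ)).add (hWint.const_mul lam)) hGint
        intro ω
        have := Real.add_one_le_exp (lam * W ω)
        simpa using by linarith
      rw [integral_add (integrable_const 1) (hWint.const_mul lam), integral_const_mul,
        hWzero] at h1
      simpa using h1
    -- independence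
    set F : Ω → ℝ := (A n).indicator (fun ω => Real.exp (lam * Z n ω)) with hF_def
    set G : Ω → ℝ := fun ω => Real.exp (lam * W ω) with hG_def
    have hFG : IndepFun F G P := by
      have hind'' : iIndep (fun i : Fin S => MeasurableSpace.comap (V i) Real.measurableSpace) P := by
        have h := (iIndepFun_iff_iIndep _ _ _).1 hind
        exact h
      set M₁ : MeasurableSpace Ω :=
        ⨆ i ∈ {i : Fin S | (i:ℕ) < n}, MeasurableSpace.comap (V i) Real.measurableSpace with hM₁
      set M₂ : MeasurableSpace Ω :=
        ⨆ i ∈ {i : Fin S | n ≤ (i:ℕ) ∧ (i:ℕ) < m},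
          MeasurableSpace.comap (V i) Real.measurableSpace with hM₂
      have hIndep : Indep M₁ M₂ P := by
        apply indep_iSup_of_disjoint (fun i => (hmeas i).comap_le) hind''
        rw [Set.disjoint_left]
        intro i h1 h2
        simp only [Set.mem_setOf_eq] at h1 h2
        omega
      have hV₁ : ∀ i : Fin S, (i:ℕ) < n → Measurable[M₁] (V i) := by
        intro i hi
        rw [measurable_iff_comap_le, hM₁]
        exact le_biSup (f := fun i : Fin S => MeasurableSpace.comap (V i) Real.measurableSpace)
          (show i ∈ {i : Fin S | (i:ℕ) < n} from hi)
      have hV₂ : ∀ i : Fin S, i ∈ s₂ → Measurable[M₂] (V i) := by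
        intro i hi
        rw [measurable_iff_comap_le, hM₂]
        simp only [Finset.mem_filter, Finset.mem_univ, true_and, hs₂] at hi
        exact le_biSup (f := fun i : Fin S => MeasurableSpace.comap (V i) Real.measurableSpace)
          (show i ∈ {i : Fin S | n ≤ (i:ℕ) ∧ (i:ℕ) < m} from hi)
      have hZ₁ : ∀ j, j ≤ n → Measurable[M₁] (Z j) := by
        intro j hj
        apply Finset.measurable_sum
        intro i hi
        simp only [Finset.mem_filter, Finset.mem_univ, true_and] at hi
        exact measurable_const.sub (hV₁ i (lt_of_lt_of_le hi hj))
      have hFmeas : Measurable[M₁] F := by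
        apply Measurable.indicator
        · exact ((hZ₁ n le_rfl).const_mul lam).exp
        · apply MeasurableSet.inter
          · exact measurableSet_le measurable_const (hZ₁ n le_rfl)
          · apply MeasurableSet.iInter
            intro j
            apply MeasurableSet.iInter
            intro hj
            exact measurableSet_lt (hZ₁ j (le_of_lt (lt_of_lt_of_le hj le_rfl))) measurable_const
      have hGmeas : Measurable[M₂] G := by
        apply Measurable.exp
        apply Measurable.const_mul
        apply Finset.measurable_sum
        intro i hi
        exact measurable_const.sub (hV₂ i hi)
      rw [IndepFun_iff_Indep]
      exact indep_of_le hIndep (measurable_iff_comap_le.1 hFmeas) (measurable_iff_comap_le.1 hGmeas)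
    have hFint : Integrable F P := by
      apply Integrable.mono' (integrable_const (Real.exp (lam * S)))
        (((hZmeas n).const_mul lam).exp.indicator (hAmeas n)).aestronglyMeasurable
      filter_upwards [hZbd n] with ω hω
      rw [Real.norm_eq_abs]
      show |(A n).indicator (fun ω => Real.exp (lam * Z n ω)) ω| ≤ Real.exp (lam * S)
      by_cases hmem : ω ∈ A n
      · rw [Set.indicator_of_mem hmem]
        rw [abs_of_pos (Real.exp_pos _), Real.exp_le_exp]
        have : Z n ω ≤ S := le_trans (le_abs_self _) hω
        nlinarith
      · rw [Set.indicator_of_notMem hmem]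
        simp [Real.exp_nonneg]
    -- chain
    have step1 : Real.exp (lam * a) * (P (A n)).toReal ≤ ∫ ω in A n, Real.exp (lam * Z n ω) ∂P := by
      have h0 : ∫ _ω in A n, Real.exp (lam * a) ∂P = (P (A n)).toReal * Real.exp (lam * a) := by
        rw [setIntegral_const]
        simp [smul_eq_mul, measureReal_def]
      rw [mul_comm, ← h0]
      apply setIntegral_mono_on
      · exact integrableOn_const (measure_ne_top P _)
      · exact (hint_exp (Z n) (hZmeas n) (hZbd n) lam).integrableOn
      · exact hAmeas n
      · intro ω hω
        rw [Real.exp_le_exp]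
        exact mul_le_mul_of_nonneg_left ((hmemA n ω).1 hω).1 (le_of_lt hlam)
    have step2 : ∫ ω in A n, Real.exp (lam * Z n ω) ∂P = ∫ ω, F ω ∂P := by
      rw [hF_def, integral_indicator (hAmeas n)]
    have step3 : ∫ ω, F ω ∂P ≤ (∫ ω, F ω ∂P) * ∫ ω, G ω ∂P := by
      have hFnonneg : 0 ≤ ∫ ω, F ω ∂P := by
        apply integral_nonneg
        intro ω
        rw [hF_def]
        apply Set.indicator_nonneg
        intro x _
        exact Real.exp_nonneg _
      nlinarith [hGone]
    have step4 : (∫ ω, F ω ∂P) * ∫ ω, G ω ∂P = ∫ ω, F ω * G ω ∂P :=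
      (hFG.integral_fun_mul_eq_mul_integral hFint.aestronglyMeasurable hGint.aestronglyMeasurable).symm
    have step5 : ∫ ω, F ω * G ω ∂P = ∫ ω in A n, Real.exp (lam * Z m ω) ∂P := by
      rw [← integral_indicator (hAmeas n)]
      apply integral_congr_ae
      apply Filter.Eventually.of_forall
      intro ω
      show (A n).indicator (fun ω => Real.exp (lam * Z n ω)) ω * Real.exp (lam * W ω)
          = (A n).indicator (fun ω => Real.exp (lam * Z m ω)) ω
      by_cases hmem : ω ∈ A n
      · rw [Set.indicator_of_mem hmem, Set.indicator_of_mem hmem, ← Real.exp_add, hZmW ω]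
        ring_nf
      · rw [Set.indicator_of_notMem hmem, Set.indicator_of_notMem hmem, zero_mul]
    calc Real.exp (lam * a) * (P (A n)).toReal
        ≤ ∫ ω in A n, Real.exp (lam * Z n ω) ∂P := step1
    _ = ∫ ω, F ω ∂P := step2
    _ ≤ (∫ ω, F ω ∂P) * ∫ ω, G ω ∂P := step3
    _ = ∫ ω, F ω * G ω ∂P := step4
    _ = ∫ ω in A n, Real.exp (lam * Z m ω) ∂P := step5
  -- sum up
  have hsum : ∑ n ∈ Finset.Icc 1 m, ∫ ω in A n, Real.exp (lam * Z m ω) ∂P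
      ≤ ∫ ω, Real.exp (lam * Z m ω) ∂P := by
    rw [← integral_biUnion_finset (Finset.Icc 1 m) (fun n _ => hAmeas n) hdisj
      (fun n _ => (hint_exp (Z m) (hZmeas m) (hZbd m) lam).integrableOn)]
    apply setIntegral_le_integral (hint_exp (Z m) (hZmeas m) (hZbd m) lam)
    apply Filter.Eventually.of_forall
    intro ω
    exact Real.exp_nonneg _
  have hPle : (P {ω | ∃ n, 1 ≤ n ∧ n ≤ m ∧ a ≤ Z n ω}).toReal
      ≤ ∑ n ∈ Finset.Icc 1 m, (P (A n)).toReal := by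
    have h1 : P {ω | ∃ n, 1 ≤ n ∧ n ≤ m ∧ a ≤ Z n ω} ≤ ∑ n ∈ Finset.Icc 1 m, P (A n) :=
      le_trans (measure_mono hcover) (measure_biUnion_finset_le _ _)
    have h2 : (∑ n ∈ Finset.Icc 1 m, P (A n)) ≠ ⊤ := by
      refine ne_of_lt (ENNReal.sum_lt_top.2 (fun n _ => measure_lt_top P _))
    calc (P {ω | ∃ n, 1 ≤ n ∧ n ≤ m ∧ a ≤ Z n ω}).toReal
        ≤ (∑ n ∈ Finset.Icc 1 m, P (A n)).toReal := ENNReal.toReal_le_toReal (measure_ne_top P _) h2 |>.2 h1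
    _ = ∑ n ∈ Finset.Icc 1 m, (P (A n)).toReal := ENNReal.toReal_sum (fun n _ => measure_ne_top P _)
  have hfinal : Real.exp (lam * a) * (P {ω | ∃ n, 1 ≤ n ∧ n ≤ m ∧ a ≤ Z n ω}).toReal
      ≤ Real.exp (m * lam^2/8) := by
    calc Real.exp (lam * a) * (P {ω | ∃ n, 1 ≤ n ∧ n ≤ m ∧ a ≤ Z n ω}).toReal
        ≤ Real.exp (lam * a) * ∑ n ∈ Finset.Icc 1 m, (P (A n)).toReal := by
          apply mul_le_mul_of_nonneg_left hPle (Real.exp_nonneg _)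
    _ = ∑ n ∈ Finset.Icc 1 m, Real.exp (lam * a) * (P (A n)).toReal := Finset.mul_sum _ _ _
    _ ≤ ∑ n ∈ Finset.Icc 1 m, ∫ ω in A n, Real.exp (lam * Z m ω) ∂P :=
          Finset.sum_le_sum hkey
    _ ≤ ∫ ω, Real.exp (lam * Z m ω) ∂P := hsum
    _ ≤ Real.exp (m * lam^2/8) := hmgf_le
  have hexp_pos : 0 < Real.exp (lam * a) := Real.exp_pos _
  have h2 : (P {ω | ∃ n, 1 ≤ n ∧ n ≤ m ∧ a ≤ Z n ω}).toReal
      ≤ Real.exp (m * lam^2/8) / Real.exp (lam * a) := by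
    rw [le_div_iff₀ hexp_pos]
    linarith [hfinal]
  have h3 : Real.exp (m * lam^2/8) / Real.exp (lam * a) = Real.exp (-2*a^2/m) := by
    rw [← Real.exp_sub]
    congr 1
    rw [hlam_def]
    field_simp
    ring
  rw [h3] at h2
  exact h2

lemma tail_bound {S : ℕ} (V : Fin S → Ω → ℝ) (hmeas : ∀ i, Measurable (V i))
    (hind : iIndepFun V P)
    (μk : ℝ) (hμ : ∀ i, ∫ ω, V i ω ∂P = μk) (hb : ∀ i, ∀ᵐ ω ∂P, V i ω ∈ Set.Icc (0:ℝ) 1)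
    (K : ℕ) (hK : 1 ≤ K) (hS : 1 ≤ S) {t : ℝ} (ht : 0 < t) :
    (P {ω | ∃ n, 1 ≤ n ∧ n ≤ S ∧
        (n:ℝ) * (Real.sqrt (logPlus ((S:ℝ)*K/n) / n) + t)
          < ∑ i ∈ Finset.univ.filter (fun i : Fin S => (i:ℕ) < n), (μk - V i ω)}).toReal
      ≤ 8 / (((S:ℝ)*K) * t^2) := by
  classical
  set T : ℝ := (S:ℝ)*K with hT_def
  have hT1 : (1:ℝ) ≤ T := by
    rw [hT_def]
    have h1 : (1:ℝ) ≤ (S:ℝ) := by exact_mod_cast hS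
    have h2 : (1:ℝ) ≤ (K:ℝ) := by exact_mod_cast hK
    nlinarith
  have hTpos : 0 < T := by linarith
  set J := Nat.log 2 S with hJ_def
  set aa : ℕ → ℝ := fun j => 2^j * t + Real.sqrt (2^j * logPlus (T / 2^(j+1))) with haa_def
  set mm : ℕ → ℕ := fun j => min (2^(j+1) - 1) S with hmm_def
  set Z : ℕ → Ω → ℝ := fun n ω =>
    ∑ i ∈ Finset.univ.filter (fun i : Fin S => (i:ℕ) < n), (μk - V i ω) with hZ_def
  set B : ℕ → Set Ω := fun j => {ω | ∃ n, 1 ≤ n ∧ n ≤ mm j ∧ aa j ≤ Z n ω} with hB_def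
  have haapos : ∀ j, 0 < aa j := by
    intro j
    rw [haa_def]
    have : (0:ℝ) < 2^j * t := by positivity
    have h2 := Real.sqrt_nonneg ((2:ℝ)^j * logPlus (T / 2^(j+1)))
    simp only
    linarith
  have hcover : {ω | ∃ n, 1 ≤ n ∧ n ≤ S ∧
      (n:ℝ) * (Real.sqrt (logPlus ((S:ℝ)*K/n) / n) + t) < Z n ω}
      ⊆ ⋃ j ∈ Finset.range (J+1), B j := by
    rintro ω ⟨n, hn1, hnS, hZn⟩
    have hn0 : n ≠ 0 := by omega
    set j := Nat.log 2 n with hj_def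
    have hjJ : j ≤ J := Nat.log_mono_right hnS
    have h2jn : 2^j ≤ n := Nat.pow_log_le_self 2 hn0
    have hn2j : n < 2^(j+1) := Nat.lt_pow_succ_log_self (by norm_num) n
    have hnmm : n ≤ mm j := by
      rw [hmm_def]
      simp only [le_min_iff]
      omega
    have hnR : (0:ℝ) < (n:ℝ) := by exact_mod_cast Nat.pos_of_ne_zero hn0
    have h2jR : ((2:ℝ)^j) ≤ (n:ℝ) := by exact_mod_cast h2jn
    have hn2jR : (n:ℝ) ≤ (2:ℝ)^(j+1) := by
      have : (n:ℝ) ≤ ((2^(j+1) : ℕ):ℝ) := by exact_mod_cast le_of_lt hn2j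
      simpa using this
    set L : ℝ := logPlus (T / n) with hL_def
    set L' : ℝ := logPlus (T / 2^(j+1)) with hL'_def
    have hL'L : L' ≤ L := by
      rw [hL_def, hL'_def]
      apply logPlus_mono
      · positivity
      · exact div_le_div_of_nonneg_left hTpos.le hnR hn2jR
    have hsqrt : Real.sqrt (2^j * L') ≤ (n:ℝ) * Real.sqrt (L / n) := by
      have hL'nn : 0 ≤ L' := logPlus_nonneg _
      have hLnn : 0 ≤ L := logPlus_nonneg _
      have h1 : (n:ℝ) * Real.sqrt (L / n) = Real.sqrt ((n:ℝ) * L) := by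
        rw [show (n:ℝ) * Real.sqrt (L / n) = Real.sqrt ((n:ℝ)^2) * Real.sqrt (L / n) by
          rw [Real.sqrt_sq hnR.le]]
        rw [← Real.sqrt_mul (by positivity)]
        congr 1
        field_simp
      rw [h1]
      apply Real.sqrt_le_sqrt
      apply mul_le_mul h2jR hL'L hL'nn hnR.le
    have haaZ : aa j ≤ Z n ω := by
      have h2 : aa j ≤ (n:ℝ) * (Real.sqrt (L / n) + t) := by
        rw [haa_def]
        simp only
        have h3 : (2:ℝ)^j * t ≤ (n:ℝ) * t := by
          apply mul_le_mul_of_nonneg_right h2jR ht.le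
        have h4 := hsqrt
        rw [← hL'_def]
        nlinarith [Real.sqrt_nonneg (L/n)]
      calc aa j ≤ (n:ℝ) * (Real.sqrt (L / n) + t) := h2
      _ ≤ Z n ω := by
            rw [hL_def, hT_def]
            exact le_of_lt hZn
    exact Set.mem_biUnion (Finset.mem_range.2 (by omega)) ⟨n, hn1, hnmm, haaZ⟩
  have hmm1 : ∀ j, 1 ≤ mm j := by
    intro j
    have h2 : 2 ≤ 2^(j+1) := by
      calc 2 = 2^1 := by norm_num
      _ ≤ 2^(j+1) := Nat.pow_le_pow_right (by norm_num) (by omega)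
    rw [hmm_def]
    simp only [le_min_iff]
    omega
  have hmmS : ∀ j, mm j ≤ S := fun j => min_le_right _ _
  have hperj : ∀ j, (P (B j)).toReal ≤ Real.exp (-2*(aa j)^2/(mm j)) := fun j =>
    maximal_ineq V hmeas hind μk hμ hb (mm j) (hmm1 j) (hmmS j) (haapos j)
  have hPle : (P {ω | ∃ n, 1 ≤ n ∧ n ≤ S ∧
      (n:ℝ) * (Real.sqrt (logPlus ((S:ℝ)*K/n) / n) + t) < Z n ω}).toReal
      ≤ ∑ j ∈ Finset.range (J+1), (P (B j)).toReal := by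
    have h1 := le_trans (measure_mono hcover) (measure_biUnion_finset_le (μ := P) (Finset.range (J+1)) B)
    have h2 : (∑ j ∈ Finset.range (J+1), P (B j)) ≠ ⊤ :=
      ne_of_lt (ENNReal.sum_lt_top.2 (fun j _ => measure_lt_top P _))
    calc (P {ω | ∃ n, 1 ≤ n ∧ n ≤ S ∧
        (n:ℝ) * (Real.sqrt (logPlus ((S:ℝ)*K/n) / n) + t) < Z n ω}).toReal
        ≤ (∑ j ∈ Finset.range (J+1), P (B j)).toReal :=
          (ENNReal.toReal_le_toReal (measure_ne_top P _) h2).2 h1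
    _ = ∑ j ∈ Finset.range (J+1), (P (B j)).toReal :=
          ENNReal.toReal_sum (fun j _ => measure_ne_top P _)
  have hnum : ∀ j, Real.exp (-2*(aa j)^2/(mm j)) ≤ 2^(j+1)/T * Real.exp (-((2:ℝ)^j * t^2)) := by
    intro j
    have hmmR : (1:ℝ) ≤ (mm j : ℝ) := by exact_mod_cast hmm1 j
    have hmmle : ((mm j : ℕ):ℝ) ≤ (2:ℝ)^(j+1) := by
      have h1 : mm j ≤ 2^(j+1) := by
        rw [hmm_def]
        simp only [min_le_iff]
        left
        exact Nat.sub_le _ _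
      calc ((mm j : ℕ):ℝ) ≤ ((2^(j+1) : ℕ):ℝ) := by exact_mod_cast h1
      _ = (2:ℝ)^(j+1) := by push_cast; ring
    set L' : ℝ := logPlus (T / 2^(j+1)) with hL'_def
    have hL'nn : 0 ≤ L' := logPlus_nonneg _
    have hsq : (Real.sqrt ((2:ℝ)^j * L'))^2 = (2:ℝ)^j * L' := Real.sq_sqrt (by positivity)
    have hx : (0:ℝ) ≤ 2^j * t := by positivity
    have hy := Real.sqrt_nonneg ((2:ℝ)^j * L')
    have hexpand : ((2:ℝ)^j*t + Real.sqrt ((2:ℝ)^j * L'))^2 ≥ ((2:ℝ)^j*t)^2 + (2:ℝ)^j * L' := by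
      nlinarith [hsq, mul_nonneg hx hy]
    have h1 : (2:ℝ)^j * t^2 + L' ≤ 2*(aa j)^2/2^(j+1) := by
      have hev : aa j = (2:ℝ)^j*t + Real.sqrt ((2:ℝ)^j * L') := by simp only [haa_def, hL'_def]
      rw [hev, le_div_iff₀ (by positivity : (0:ℝ) < (2:ℝ)^(j+1))]
      have hps : (2:ℝ)^(j+1) = 2^j * 2 := pow_succ 2 j
      rw [hps]
      nlinarith [hexpand]
    have h2 : -2*(aa j)^2/(mm j) ≤ -((2:ℝ)^j*t^2 + L') := by
      have hstep : 2*(aa j)^2/2^(j+1) ≤ 2*(aa j)^2/(mm j) := by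
        apply div_le_div_of_nonneg_left (by positivity) (by linarith) hmmle
      have h3 := le_trans h1 hstep
      have h4 : -2*(aa j)^2/(mm j) = -(2*(aa j)^2/(mm j)) := by ring
      rw [h4]
      linarith
    calc Real.exp (-2*(aa j)^2/(mm j)) ≤ Real.exp (-((2:ℝ)^j*t^2 + L')) := Real.exp_le_exp.2 h2
    _ = Real.exp (-((2:ℝ)^j*t^2)) * Real.exp (-L') := by rw [← Real.exp_add]; ring_nf
    _ ≤ Real.exp (-((2:ℝ)^j*t^2)) * (2^(j+1)/T) := by
          apply mul_le_mul_of_nonneg_left _ (Real.exp_nonneg _)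
          have hpos : (0:ℝ) < T / 2^(j+1) := by positivity
          have := exp_neg_logPlus_le hpos
          rwa [one_div_div] at this
    _ = 2^(j+1)/T * Real.exp (-((2:ℝ)^j * t^2)) := mul_comm _ _
  have hsum : ∑ j ∈ Finset.range (J+1), (2:ℝ)^(j+1)/T * Real.exp (-((2:ℝ)^j * t^2))
      ≤ 8 / (T * t^2) := by
    have h1 : ∀ j, (2:ℝ)^(j+1)/T * Real.exp (-((2:ℝ)^j * t^2))
        = (2/T) * ((2:ℝ)^j * Real.exp (-((2:ℝ)^j * t^2))) := by
      intro j
      rw [pow_succ]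
      ring
    rw [Finset.sum_congr rfl (fun j _ => h1 j), ← Finset.mul_sum]
    have h2 := sum_two_pow_exp_le (J+1) (b := t^2) (by positivity)
    calc (2/T) * ∑ j ∈ Finset.range (J+1), (2:ℝ)^j * Real.exp (-((2:ℝ)^j * t^2))
        ≤ (2/T) * (4 / t^2) := by
          apply mul_le_mul_of_nonneg_left h2 (by positivity)
    _ = 8 / (T * t^2) := by field_simp; ring
  calc (P {ω | ∃ n, 1 ≤ n ∧ n ≤ S ∧
      (n:ℝ) * (Real.sqrt (logPlus ((S:ℝ)*K/n) / n) + t) < Z n ω}).toReal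
      ≤ ∑ j ∈ Finset.range (J+1), (P (B j)).toReal := hPle
  _ ≤ ∑ j ∈ Finset.range (J+1), (2:ℝ)^(j+1)/T * Real.exp (-((2:ℝ)^j * t^2)) :=
        Finset.sum_le_sum (fun j _ => le_trans (hperj j) (hnum j))
  _ ≤ 8 / (T * t^2) := hsum

lemma sum_filter_fin_eq {S n : ℕ} (hn : n ≤ S) (f : ℕ → ℝ) :
    ∑ i ∈ Finset.univ.filter (fun i : Fin S => (i:ℕ) < n), f ((i:ℕ) + 1)
      = ∑ j ∈ Finset.Icc 1 n, f j := by
  apply Finset.sum_bij' (i := fun (a : Fin S) (_ : a ∈ Finset.univ.filter (fun i : Fin S => (i:ℕ) < n)) => (a:ℕ)+1)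
    (j := fun (b : ℕ) (hb : b ∈ Finset.Icc 1 n) =>
      (⟨b-1, by rw [Finset.mem_Icc] at hb; omega⟩ : Fin S))
  case hi =>
    intro a ha
    rw [Finset.mem_filter] at ha
    rw [Finset.mem_Icc]
    omega
  case hj =>
    intro b hb
    have hb' := hb
    rw [Finset.mem_Icc] at hb'
    rw [Finset.mem_filter]
    refine ⟨Finset.mem_univ _, ?_⟩
    show b - 1 < n
    omega
  case left_neg =>
    intro a ha
    apply Fin.ext
    show (a:ℕ) + 1 - 1 = (a:ℕ)
    omega
  case right_neg =>
    intro b hb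
    rw [Finset.mem_Icc] at hb
    show (b - 1) + 1 = b
    omega
  case h =>
    intro a ha
    rfl


lemma integral_H_le {S K : ℕ} (hK : 1 ≤ K) (hS4 : 4 ≤ S) (D : ℕ → ℕ → Ω → ℝ)
    (k : ℕ) (μk : ℝ)
    (hmeasD : ∀ j, Measurable (D k j))
    (hbD : ∀ j ∈ Finset.Icc 1 S, ∀ᵐ ω ∂P, D k j ω ∈ Set.Icc (0:ℝ) 1)
    (hindV : iIndepFun
      (fun i : Fin S => D k ((i:ℕ)+1)) P)
    (hmeanD : ∀ j ∈ Finset.Icc 1 S, ∫ ω, D k j ω ∂P = μk)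
    (N : Ω → ℕ) (hN : Measurable N) (hNle : ∀ ω, N ω ≤ S) :
    ∫ ω, max (μk - ucbU S K D k (N ω) ω) 0 ∂P ≤ 6 / Real.sqrt ((S:ℝ)*K) := by
  classical
  set V : Fin S → Ω → ℝ := fun i => D k ((i:ℕ)+1) with hV_def
  have hmeasV : ∀ i, Measurable (V i) := fun i => hmeasD _
  have hmemIcc : ∀ i : Fin S, (i:ℕ)+1 ∈ Finset.Icc 1 S := by
    intro i
    rw [Finset.mem_Icc]
    have := i.isLt
    omega
  have hbV : ∀ i, ∀ᵐ ω ∂P, V i ω ∈ Set.Icc (0:ℝ) 1 := fun i => hbD _ (hmemIcc i)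
  have hμV : ∀ i, ∫ ω, V i ω ∂P = μk := fun i => hmeanD _ (hmemIcc i)
  set T : ℝ := (S:ℝ)*K with hT_def
  have hT4 : (4:ℝ) ≤ T := by
    rw [hT_def]
    have h1 : (4:ℝ) ≤ (S:ℝ) := by exact_mod_cast hS4
    have h2 : (1:ℝ) ≤ (K:ℝ) := by exact_mod_cast hK
    nlinarith
  have hTpos : (0:ℝ) < T := by linarith
  have hsq : 0 < Real.sqrt T := Real.sqrt_pos.2 hTpos
  have h1S : (1:ℕ) ∈ Finset.Icc 1 S := by rw [Finset.mem_Icc]; omega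
  have hD1int : Integrable (D k 1) P := by
    apply Integrable.mono' (integrable_const (1:ℝ)) (hmeasD 1).aestronglyMeasurable
    filter_upwards [hbD 1 h1S] with ω hω
    rw [Real.norm_eq_abs, abs_le]
    exact ⟨by linarith [hω.1], hω.2⟩
  have hμk0 : 0 ≤ μk := by
    rw [← hmeanD 1 h1S]
    apply integral_nonneg_of_ae
    filter_upwards [hbD 1 h1S] with ω hω using hω.1
  have hμk1 : μk ≤ 1 := by
    rw [← hmeanD 1 h1S]
    calc ∫ ω, D k 1 ω ∂P ≤ ∫ _, (1:ℝ) ∂P := by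
          apply integral_mono_ae hD1int (integrable_const 1)
          filter_upwards [hbD 1 h1S] with ω hω using hω.2
    _ = 1 := by simp
  have hgood : ∀ᵐ ω ∂P, ∀ j ∈ Finset.Icc 1 S, D k j ω ∈ Set.Icc (0:ℝ) 1 := by
    filter_upwards [ae_all_iff.2 hbV] with ω hω
    intro j hj
    rw [Finset.mem_Icc] at hj
    have h2 := hω ⟨j-1, by omega⟩
    simp only [hV_def] at h2
    rwa [Nat.sub_add_cancel hj.1] at h2
  set H : Ω → ℝ := fun ω => max (μk - ucbU S K D k (N ω) ω) 0 with hH_def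
  have hucb : ∀ n, Measurable (fun ω => ucbU S K D k n ω) := by
    intro n
    by_cases hn : n = 0
    · simp only [ucbU, hn, if_true]
      exact measurable_const
    · simp only [ucbU, hn, if_false]
      apply Measurable.min measurable_const
      apply Measurable.add _ measurable_const
      unfold sampleMean
      exact (Finset.measurable_sum _ (fun j _ => hmeasD j)).div_const _
  have hinner : Measurable (fun ω => ucbU S K D k (N ω) ω) := by
    have hg : Measurable (fun p : Ω × ℕ => ucbU S K D k p.2 p.1) :=
      measurable_from_prod_countable_left (fun n => hucb n)
    exact hg.comp (measurable_id.prodMk hN)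
  have hHmeas : Measurable H := (measurable_const.sub hinner).max measurable_const
  have hHnonneg : ∀ ω, 0 ≤ H ω := fun ω => le_max_right _ _
  have hHle1 : ∀ᵐ ω ∂P, H ω ≤ 1 := by
    filter_upwards [hgood] with ω hω
    rw [hH_def]
    simp only
    apply max_le _ (by norm_num)
    by_cases hn : N ω = 0
    · simp only [ucbU, hn, if_true]
      linarith
    · simp only [ucbU, hn, if_false]
      have hX : 0 ≤ sampleMean D k (N ω) ω := by
        unfold sampleMean
        apply div_nonneg _ (by positivity)
        apply Finset.sum_nonneg
        intro j hj
        rw [Finset.mem_Icc] at hj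
        exact (hω j (by rw [Finset.mem_Icc]; exact ⟨hj.1, le_trans hj.2 (hNle ω)⟩)).1
      have hβ : 0 ≤ Real.sqrt (logPlus ((S:ℝ)*K/(N ω)) / (N ω)) := Real.sqrt_nonneg _
      have hmin : 0 ≤ min 1 (sampleMean D k (N ω) ω + Real.sqrt (logPlus ((S:ℝ)*K/(N ω)) / (N ω))) := by
        apply le_min (by norm_num)
        linarith
      linarith
  have hHint : Integrable H P := by
    apply Integrable.mono' (integrable_const (1:ℝ)) hHmeas.aestronglyMeasurable
    filter_upwards [hHle1] with ω hω
    rw [Real.norm_eq_abs, abs_of_nonneg (hHnonneg ω)]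
    exact hω
  -- layer cake
  rw [hHint.integral_eq_integral_meas_lt (Filter.Eventually.of_forall hHnonneg)]
  set g : ℝ → ℝ := fun t => (P {ω | t < H ω}).toReal with hg_def
  have hganti : Antitone g := by
    intro t t' htt'
    exact ENNReal.toReal_mono (measure_ne_top P _)
      (measure_mono (fun ω h => lt_of_le_of_lt htt' h))
  have hg1 : ∀ t, g t ≤ 1 := by
    intro t
    rw [hg_def]
    calc (P {ω | t < H ω}).toReal ≤ (1 : ℝ≥0∞).toReal :=
          ENNReal.toReal_mono (by norm_num) prob_le_one
    _ = 1 := by simp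
  have hgnonneg : ∀ t, 0 ≤ g t := fun t => ENNReal.toReal_nonneg
  have hgzero : ∀ t, 1 ≤ t → g t = 0 := by
    intro t ht
    rw [hg_def]
    simp only
    have h0 : P {ω | ¬ H ω ≤ 1} = 0 := by
      rw [← MeasureTheory.ae_iff]
      exact hHle1
    have hsub : {ω | t < H ω} ⊆ {ω | ¬ H ω ≤ 1} := by
      intro ω hω
      simp only [Set.mem_setOf_eq, not_le] at hω ⊢
      linarith
    rw [measure_mono_null hsub h0]
    simp
  -- tail bound for t > 0
  have htail : ∀ t : ℝ, 0 < t → g t ≤ 8 / (T * t^2) := by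
    intro t ht
    set E : Set Ω := {ω | ∃ n, 1 ≤ n ∧ n ≤ S ∧
        (n:ℝ) * (Real.sqrt (logPlus ((S:ℝ)*K/n) / n) + t)
          < ∑ i ∈ Finset.univ.filter (fun i : Fin S => (i:ℕ) < n), (μk - V i ω)} with hE_def
    have hsub : ∀ᵐ ω ∂P, ω ∈ {ω | t < H ω} → ω ∈ E := by
      filter_upwards [hgood] with ω hω hmem
      set n := N ω with hn_def
      have hnS : n ≤ S := hNle ω
      have hmax : t < μk - ucbU S K D k n ω := by
        have h0 : t < max (μk - ucbU S K D k n ω) 0 := hmem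
        rcases max_cases (μk - ucbU S K D k n ω) 0 with ⟨heq, _⟩ | ⟨heq, _⟩
        · rwa [heq] at h0
        · rw [heq] at h0; linarith
      have hn0 : n ≠ 0 := by
        intro h0
        rw [h0] at hmax
        simp only [ucbU, if_true] at hmax
        linarith
      have hn1 : 1 ≤ n := Nat.one_le_iff_ne_zero.2 hn0
      have hnpos : (0:ℝ) < (n:ℝ) := by exact_mod_cast Nat.pos_of_ne_zero hn0
      set β := Real.sqrt (logPlus ((S:ℝ)*K/n) / n) with hβ_def
      set c := sampleMean D k n ω + β with hc_def
      have hucbn : ucbU S K D k n ω = min 1 c := by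
        simp only [ucbU, hn0, if_false, hc_def, hβ_def]
      rw [hucbn] at hmax
      have hcmin : t < μk - c := by
        rcases le_total c 1 with hc1 | hc1
        · rwa [min_eq_right hc1] at hmax
        · rw [min_eq_left hc1] at hmax
          linarith
      -- convert to sum form
      have hsum_eq : ∑ i ∈ Finset.univ.filter (fun i : Fin S => (i:ℕ) < n), (μk - V i ω)
          = (n:ℝ) * μk - ∑ j ∈ Finset.Icc 1 n, D k j ω := by
        rw [hV_def]
        have := sum_filter_fin_eq (S := S) hnS (fun j => μk - D k j ω)
        rw [this, Finset.sum_sub_distrib, Finset.sum_const, Nat.card_Icc]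
        simp only [nsmul_eq_mul]
        push_cast
        ring
      have hsm : sampleMean D k n ω = (∑ j ∈ Finset.Icc 1 n, D k j ω) / n := rfl
      set SD := ∑ j ∈ Finset.Icc 1 n, D k j ω with hSD_def
      have hkey : (n:ℝ) * (β + t) < (n:ℝ) * μk - SD := by
        have h3 := mul_lt_mul_of_pos_left hcmin hnpos
        rw [hc_def, hsm] at h3
        have h4 : (n:ℝ) * (SD / n) = SD := by
          field_simp
        nlinarith [h3, h4]
      rw [hE_def]
      refine ⟨n, hn1, hnS, ?_⟩
      rw [hsum_eq]
      exact hkey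
    have hle := measure_mono_ae hsub
    calc g t ≤ (P E).toReal :=
          ENNReal.toReal_mono (measure_ne_top P _) hle
    _ ≤ 8 / (T * t^2) := by
          rw [hT_def]
          exact tail_bound V hmeasV hindV μk hμV hbV K hK (by omega) ht
  -- now the integral over Ioi 0
  set t₀ : ℝ := 3 / Real.sqrt T with ht₀_def
  have ht₀pos : 0 < t₀ := by positivity
  have hIoc1 : IntegrableOn g (Set.Ioc 0 1) := by
    apply Integrable.mono' (integrableOn_const (C := (1:ℝ)) (by
      rw [Real.volume_Ioc]; exact ENNReal.ofReal_ne_top))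
      (hganti.measurable.aestronglyMeasurable)
    apply Filter.Eventually.of_forall
    intro t
    rw [Real.norm_eq_abs, abs_of_nonneg (hgnonneg t)]
    exact hg1 t
  have hIoi1 : IntegrableOn g (Set.Ioi 1) := by
    apply IntegrableOn.congr_fun (integrableOn_zero) _ measurableSet_Ioi
    intro t ht
    exact (hgzero t (le_of_lt ht)).symm
  have hIoi0 : IntegrableOn g (Set.Ioi 0) := by
    rw [← Set.Ioc_union_Ioi_eq_Ioi (by norm_num : (0:ℝ) ≤ 1)]
    exact hIoc1.union hIoi1
  have hsplit : Set.Ioc 0 t₀ ∪ Set.Ioi t₀ = Set.Ioi (0:ℝ) :=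
    Set.Ioc_union_Ioi_eq_Ioi (le_of_lt ht₀pos)
  have hdisj : Disjoint (Set.Ioc (0:ℝ) t₀) (Set.Ioi t₀) := Set.Ioc_disjoint_Ioi le_rfl
  have hint1 : IntegrableOn g (Set.Ioc 0 t₀) := hIoi0.mono_set (by
    rw [← hsplit]; exact Set.subset_union_left)
  have hint2 : IntegrableOn g (Set.Ioi t₀) := hIoi0.mono_set (by
    rw [← hsplit]; exact Set.subset_union_right)
  have heq : ∫ t in Set.Ioi 0, g t = (∫ t in Set.Ioc 0 t₀, g t) + ∫ t in Set.Ioi t₀, g t := by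
    rw [← setIntegral_union hdisj measurableSet_Ioi hint1 hint2, hsplit]
  have hbound1 : ∫ t in Set.Ioc 0 t₀, g t ≤ t₀ := by
    calc ∫ t in Set.Ioc 0 t₀, g t ≤ ∫ _t in Set.Ioc 0 t₀, (1:ℝ) := by
          apply setIntegral_mono_on hint1 (integrableOn_const (by
            rw [Real.volume_Ioc]; exact ENNReal.ofReal_ne_top)) measurableSet_Ioc
          intro t _
          exact hg1 t
    _ = t₀ := by
          rw [setIntegral_const, Real.volume_real_Ioc, smul_eq_mul, mul_one,
            max_eq_left (by linarith)]
          ring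
  have hrpow_int : IntegrableOn (fun t : ℝ => 8/T * t^(-2:ℝ)) (Set.Ioi t₀) :=
    (integrableOn_Ioi_rpow_of_lt (by norm_num) ht₀pos).const_mul _
  have hbound2 : ∫ t in Set.Ioi t₀, g t ≤ 8/T * t₀⁻¹ := by
    have hle : ∫ t in Set.Ioi t₀, g t ≤ ∫ t in Set.Ioi t₀, 8/T * t^(-2:ℝ) := by
      apply setIntegral_mono_on hint2 hrpow_int measurableSet_Ioi
      intro t ht
      rw [Set.mem_Ioi] at ht
      have htpos : 0 < t := lt_trans ht₀pos ht
      have hrw : t^(-2:ℝ) = (t^2)⁻¹ := by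
        rw [Real.rpow_neg htpos.le, show ((2:ℝ)) = ((2:ℕ):ℝ) by norm_num, Real.rpow_natCast]
      rw [hrw]
      calc g t ≤ 8 / (T * t^2) := htail t htpos
      _ = 8/T * (t^2)⁻¹ := by field_simp
    have hval : ∫ t in Set.Ioi t₀, 8/T * t^(-2:ℝ) = 8/T * t₀⁻¹ := by
      rw [MeasureTheory.integral_const_mul, integral_Ioi_rpow_of_lt (by norm_num) ht₀pos]
      congr 1
      rw [show (-2:ℝ)+1 = -1 by norm_num, Real.rpow_neg_one]
      ring
    linarith [hle, hval.le, hval.ge]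
  have h8 : 8/T * t₀⁻¹ ≤ 3 / Real.sqrt T := by
    rw [ht₀_def, inv_div]
    rw [le_div_iff₀ hsq]
    have h1 : 8/T * (Real.sqrt T/3) * Real.sqrt T = 8/3 * (Real.sqrt T * Real.sqrt T) / T := by
      ring
    rw [h1, Real.mul_self_sqrt hTpos.le, mul_div_assoc, div_self (ne_of_gt hTpos), mul_one]
    norm_num
  calc ∫ t in Set.Ioi 0, g t ≤ t₀ + 8/T * t₀⁻¹ := by
        rw [heq]; exact add_le_add hbound1 hbound2
  _ ≤ 3 / Real.sqrt T + 3 / Real.sqrt T := by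
        rw [ht₀_def]
        exact add_le_add le_rfl h8
  _ = 6 / Real.sqrt T := by ring

end Omega

end AuxLemmas

/-- `Σ_k Σ_s E[(μ_k − U_k(N_{k,s}))⁺] ≤ 6√(SK)` for arbitrary `{0,…,S}`-valued
random indices `N_{k,s}`. -/
theorem ucb_underestimate_expectation_bound
    {Ω : Type*} [MeasurableSpace Ω] (P : Measure Ω) [IsProbabilityMeasure P]
    (S K : ℕ) (hK : 0 < K) (hSK : 4 * K ≤ S)
    (D : ℕ → ℕ → Ω → ℝ) (hDmeas : ∀ k n, Measurable (D k n))
    (hindep : iIndepFun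
      (fun p : Fin K × Fin S => D ((p.1 : ℕ) + 1) ((p.2 : ℕ) + 1)) P)
    (hident : ∀ k ∈ Finset.Icc 1 K, ∀ n ∈ Finset.Icc 1 S, IdentDistrib (D k n) (D k 1) P P)
    (hbdd : ∀ k ∈ Finset.Icc 1 K, ∀ n ∈ Finset.Icc 1 S, ∀ᵐ ω ∂P, D k n ω ∈ Set.Icc (0 : ℝ) 1)
    (μ : ℕ → ℝ) (hmean : ∀ k ∈ Finset.Icc 1 K, ∫ ω, D k 1 ω ∂P = μ k)
    (N : ℕ → ℕ → Ω → ℕ) (hNmeas : ∀ k s, Measurable (N k s))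
    (hNle : ∀ k s ω, N k s ω ≤ S) :
    ∑ k ∈ Finset.Icc 1 K, ∑ s ∈ Finset.Icc 1 S,
      ∫ ω, max (μ k - ucbU S K D k (N k s ω) ω) 0 ∂P
      ≤ 6 * Real.sqrt ((S : ℝ) * K) := by
  classical
  have hS4 : 4 ≤ S := by omega
  have hK1 : 1 ≤ K := hK
  have hSpos : 0 < S := by omega
  -- per-pair bound
  have hpair : ∀ k ∈ Finset.Icc 1 K, ∀ s ∈ Finset.Icc 1 S,
      ∫ ω, max (μ k - ucbU S K D k (N k s ω) ω) 0 ∂P ≤ 6 / Real.sqrt ((S:ℝ)*K) := by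
    intro k hk s _
    rw [Finset.mem_Icc] at hk
    have hk1 : 1 ≤ k := hk.1
    have hkK : k ≤ K := hk.2
    -- mean for all j
    have hmeanD : ∀ j ∈ Finset.Icc 1 S, ∫ ω, D k j ω ∂P = μ k := by
      intro j hj
      have h1 := (hident k (by rw [Finset.mem_Icc]; exact hk) j hj).integral_eq
      rw [h1]
      exact hmean k (by rw [Finset.mem_Icc]; exact hk)
    -- independence of the subfamily
    have hkltK : k - 1 < K := by omega
    set kk : Fin K := ⟨k-1, hkltK⟩ with hkk_def
    have hginj : Function.Injective (fun i : Fin S => ((kk, i) : Fin K × Fin S)) := by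
      intro a b h
      simpa using congrArg Prod.snd h
    haveI : Nonempty (Fin S) := ⟨⟨0, hSpos⟩⟩
    have hindV : iIndepFun
        (fun i : Fin S => D k ((i:ℕ)+1)) P := by
      have h1 : iIndepFun
          (fun i : Fin S => D ((kk:ℕ)+1) ((i:ℕ)+1)) P :=
        iIndepFun_precomp_inj (fun i : Fin S => ((kk, i) : Fin K × Fin S)) hginj hindep
      have hkkk : ((kk:ℕ)+1) = k := by
        show k - 1 + 1 = k
        omega
      rwa [hkkk] at h1
    exact integral_H_le hK1 hS4 D k (μ k) (hDmeas k)
      (hbdd k (by rw [Finset.mem_Icc]; exact hk)) hindV hmeanD (N k s) (hNmeas k s)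
      (fun ω => hNle k s ω)
  -- sum it
  have hsq : 0 < Real.sqrt ((S:ℝ)*K) := by
    apply Real.sqrt_pos.2
    have h1 : (0:ℝ) < (S:ℝ) := by exact_mod_cast hSpos
    have h2 : (0:ℝ) < (K:ℝ) := by exact_mod_cast hK
    positivity
  calc ∑ k ∈ Finset.Icc 1 K, ∑ s ∈ Finset.Icc 1 S,
      ∫ ω, max (μ k - ucbU S K D k (N k s ω) ω) 0 ∂P
      ≤ ∑ k ∈ Finset.Icc 1 K, ∑ s ∈ Finset.Icc 1 S, (6 / Real.sqrt ((S:ℝ)*K)) := by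
        apply Finset.sum_le_sum
        intro k hk
        apply Finset.sum_le_sum
        intro s hs
        exact hpair k hk s hs
  _ = (K:ℝ) * ((S:ℝ) * (6 / Real.sqrt ((S:ℝ)*K))) := by
        rw [Finset.sum_const, Finset.sum_const]
        simp only [Nat.card_Icc, Nat.add_sub_cancel, nsmul_eq_mul]
        try push_cast
        try ring
  _ = 6 * (((S:ℝ)*K) / Real.sqrt ((S:ℝ)*K)) := by ring
  _ = 6 * Real.sqrt ((S:ℝ)*K) := by rw [Real.div_sqrt]
end
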